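/- arXiv:2003.01676 — 4 statements merged into one kernel-verified Lean document; each statement's English description precedes it below -/
import Mathlib

section
/- Suppose in addition that there are real numbers s and t with t > 0 such that s_i = s and t_i = t for all i ≥ 1. Fix a positive integer n, and for a real number x and e ∈ {0,1,2} set X = (x+s)/(2√t) and F_e(x) := (√t)^{n+e}·U_{n+e}(X) − (s − s_0)·(√t)^{n+e−1}·U_{n+e−1}(X) + (t − t_0)·(√t)^{n+e−2}·U_{n+e−2}(X) (with U_{−1} = 0, which can only occur when n = 1 and e = 0). Then for all real numbers α, β, γ, det(αβγ·m_{i+j} + (αβ+βγ+γα)·m_{i+j+1} + (α+β+γ)·m_{i+j+2} + m_{i+j+3})_{i,j=0}^{n−1} · (β−α)(γ−α)(γ−β) = det( F_j(x_i) )_{i,j=0}^{2} · det(m_{i+j})_{i,j=0}^{n−1}, where (x_0, x_1, x_2) = (α, β, γ) and the 3×3 matrix has (i,j)-entry F_j(x_i). -/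
/-- `motzkinGF s t n k` is the weighted Motzkin path generating function `m(n,k)`. -/
def motzkinGF (s t : ℕ → ℝ) : ℕ → ℤ → ℝ
  | 0, k => if k = 0 then 1 else 0
  | n+1, k =>
      if k < 0 then 0
      else motzkinGF s t n (k-1) + s k.toNat * motzkinGF s t n k
             + t k.toNat * motzkinGF s t n (k+1)

/-- The Chebyshev polynomial of the second kind, evaluated at a real argument
(`ℤ`-indexed; in particular `chebU (-1) x = 0`). -/
noncomputable def chebU (k : ℤ) (x : ℝ) : ℝ := (Polynomial.Chebyshev.U ℝ k).eval x

/-- `F_e(x) = (√t)^{n+e} U_{n+e}(X) - (s-s₀)(√t)^{n+e-1} U_{n+e-1}(X)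
  + (t-t₀)(√t)^{n+e-2} U_{n+e-2}(X)` with `X = (x+s)/(2√t)`. -/
noncomputable def Fcheb (s₀ t₀ sc tc : ℝ) (n : ℕ) (e : ℕ) (x : ℝ) : ℝ :=
  Real.sqrt tc ^ ((n : ℤ) + e) * chebU ((n : ℤ) + e) ((x + sc) / (2 * Real.sqrt tc))
    - (sc - s₀) * Real.sqrt tc ^ ((n : ℤ) + e - 1)
        * chebU ((n : ℤ) + e - 1) ((x + sc) / (2 * Real.sqrt tc))
    + (tc - t₀) * Real.sqrt tc ^ ((n : ℤ) + e - 2)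
        * chebU ((n : ℤ) + e - 2) ((x + sc) / (2 * Real.sqrt tc))

/-!
Let `L` be the linear functional on `ℝ[X]` with `L (X ^ j) = m_j`, and `p_k` the monic
polynomials with `p_{k+1} = (X - s_k) p_k - t_{k-1} p_{k-1}`. The recurrence of `m(i, k)` gives
`L (X ^ i * p_k) = t_0 ⋯ t_{k-1} · m(i, k)`, which vanishes for `i < k` and equals
`t_0 ⋯ t_{k-1}` for `i = k`; in particular `det (m_{i+j})_{i,j<N} = ∏_{k<N} t_0 ⋯ t_{k-1}`.

The theorem is Christoffel's formula for `w = (X + α)(X + β)(X + γ)`. Let `C` be the coefficient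
matrix of `w, wX, …, wX^{n-1}, p_n, p_{n+1}, p_{n+2}`. The Hankel matrix of size `n + 3` times
`C` has entries `L (X ^ i * q)` and is block lower triangular: one diagonal block is the
four-term Hankel matrix `L (X ^ (i+j) * w)`, the other is triangular with diagonal
`t_0 ⋯ t_{n+a-1}`. On the other hand, reading off the coefficients of degree `≥ 3` and
evaluating at the roots `-α, -β, -γ` of `w` kills the multiples of `w`, so `det C` times the
Vandermonde determinant is `±det (p_{n+a}(-x_l))`. Finally, since `s_i = s` and `t_i = t` for
`i ≥ 1`, both `(-1)^k p_k(-x)` and `(√t)^k U_k((x + s)/(2√t))` satisfy the recurrence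
`u_{k+2} = (x + s) u_{k+1} - t u_k` for `k ≥ 1`; the combination `F_e` of shifted Chebyshev terms
matches `p_1` and `p_2`, so `p_{n+e}(-x) = (-1)^{n+e} F_e(x)`.
-/

open Polynomial Finset Matrix

namespace Matrix

variable {R : Type*} [CommRing R]

lemma det_mul_eq_det_submatrix_mul_det_submatrix {ι κ : Type*} [Fintype ι] [DecidableEq ι]
    [Fintype κ] (A : Matrix ι κ R) (B : Matrix κ ι R) (e : ι ≃ κ) :
    (A * B).det = (A.submatrix id e).det * (B.submatrix e id).det := by
  rw [← det_mul, submatrix_mul_equiv, submatrix_id_id]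

lemma det_submatrix_id_perm_comp {ι κ : Type*} [Fintype ι] [DecidableEq ι] [Fintype κ]
    [DecidableEq κ] (A : Matrix ι κ R) (e : ι ≃ κ) (σ : Equiv.Perm κ) :
    (A.submatrix id (σ ∘ e)).det = Equiv.Perm.sign σ * (A.submatrix id e).det := by
  have : A.submatrix id (σ ∘ e) = (A.submatrix id e).submatrix id (e.symm.permCongr σ) := by
    ext i j
    simp [Equiv.permCongr_apply]
  rw [this, det_permute', Equiv.Perm.sign_permCongr]

lemma det_of_toBlocks₁₂_eq_zero {m n : Type*} [Fintype m] [DecidableEq m] [Fintype n]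
    [DecidableEq n] (M : Matrix (m ⊕ n) (m ⊕ n) R) (h : M.toBlocks₁₂ = 0) :
    M.det = M.toBlocks₁₁.det * M.toBlocks₂₂.det := by
  rw [← fromBlocks_toBlocks M, h, det_fromBlocks_zero₁₂, toBlocks_fromBlocks₁₁,
    toBlocks_fromBlocks₂₂]

lemma det_of_toBlocks₂₁_eq_zero {m n : Type*} [Fintype m] [DecidableEq m] [Fintype n]
    [DecidableEq n] (M : Matrix (m ⊕ n) (m ⊕ n) R) (h : M.toBlocks₂₁ = 0) :
    M.det = M.toBlocks₁₁.det * M.toBlocks₂₂.det := by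
  rw [← fromBlocks_toBlocks M, h, det_fromBlocks_zero₂₁, toBlocks_fromBlocks₁₁,
    toBlocks_fromBlocks₂₂]

end Matrix

lemma coe_finRotate_pow_apply {N : ℕ} (k : ℕ) (i : Fin N) :
    ((finRotate N ^ k) i : ℕ) = (i + k) % N := by
  induction k with
  | zero => simp [Nat.mod_eq_of_lt i.isLt]
  | succ k ih =>
    obtain _ | N := N
    · exact i.elim0
    rw [pow_succ', Equiv.Perm.mul_apply, finRotate_apply, Fin.val_add, ih, ← add_assoc,
      Nat.add_mod (i + k), Fin.val_one']

lemma coe_finRotate_pow_castAdd {n m : ℕ} (j : Fin n) :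
    ((finRotate (n + m) ^ m) (Fin.castAdd m j) : ℕ) = j + m := by
  rw [coe_finRotate_pow_apply, Fin.val_castAdd, Nat.mod_eq_of_lt (by omega)]

lemma coe_finRotate_pow_natAdd {n m : ℕ} (a : Fin m) :
    ((finRotate (n + m) ^ m) (Fin.natAdd n a) : ℕ) = a := by
  rw [coe_finRotate_pow_apply, Fin.val_natAdd, show n + a + m = a + (n + m) by omega,
    Nat.add_mod_right, Nat.mod_eq_of_lt (by omega)]

lemma sign_finRotate_pow (n m : ℕ) :
    Equiv.Perm.sign (finRotate (n + m) ^ m) = (-1) ^ (m * n) := by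
  rw [map_pow, sign_finRotate, ← pow_mul]
  obtain _ | m := m
  · simp
  rw [show n + (m + 1) - 1 = n + m by omega,
    show (n + m) * (m + 1) = (m + 1) * n + m * (m + 1) by ring, pow_add,
    (Nat.even_mul_succ_self m).neg_one_pow, mul_one]

def hankel {R : Type*} (a : ℕ → R) (N : ℕ) : Matrix (Fin N) (Fin N) R :=
  of fun i j => a (i + j)

def coeffMatrix {R κ : Type*} [Semiring R] (N : ℕ) (q : κ → R[X]) : Matrix (Fin N) κ R :=
  of fun r c => (q c).coeff r

lemma pow_mul_coeffMatrix {R ι κ : Type*} [CommRing R] {N : ℕ} (y : ι → R) {q : κ → R[X]}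
    (hq : ∀ c, (q c).natDegree < N) :
    (of fun l (r : Fin N) => y l ^ (r : ℕ)) * coeffMatrix N q = of fun l c => (q c).eval (y l) := by
  ext l c
  rw [of_apply, eval_eq_sum_range' (hq c), ← Fin.sum_univ_eq_sum_range]
  simp only [mul_apply, of_apply, coeffMatrix, mul_comm]

lemma natDegree_prod_X_sub_C_mul_X_pow {R : Type*} [CommRing R] [Nontrivial R] {m : ℕ}
    (y : Fin m → R) (j : ℕ) : ((∏ l, (X - C (y l))) * X ^ j).natDegree = m + j := by
  rw [(monic_prod_X_sub_C _ _).natDegree_mul (monic_X_pow j),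
    natDegree_finsetProd_X_sub_C_eq_card, natDegree_X_pow, card_univ, Fintype.card_fin]

section Motzkin

variable (s t : ℕ → ℝ)

lemma motzkinGF_of_neg (n : ℕ) {k : ℤ} (hk : k < 0) : motzkinGF s t n k = 0 := by
  cases n <;> simp [motzkinGF, hk, hk.ne]

lemma motzkinGF_succ_zero (n : ℕ) :
    motzkinGF s t (n + 1) 0 = s 0 * motzkinGF s t n 0 + t 0 * motzkinGF s t n 1 := by
  simp [motzkinGF, motzkinGF_of_neg]

lemma motzkinGF_succ_natCast_add_one (n k : ℕ) :
    motzkinGF s t (n + 1) (k + 1) =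
      motzkinGF s t n k + s (k + 1) * motzkinGF s t n (k + 1)
        + t (k + 1) * motzkinGF s t n (k + 2) := by
  rw [motzkinGF, if_neg (by omega), add_sub_cancel_right]
  norm_cast

lemma motzkinGF_natCast_eq_zero_of_lt {n k : ℕ} (h : n < k) : motzkinGF s t n k = 0 := by
  induction n generalizing k with
  | zero => simp [motzkinGF, h.ne']
  | succ n ih =>
    obtain ⟨k, rfl⟩ : ∃ k', k = k' + 1 := Nat.exists_eq_add_one.mpr (by omega)
    push_cast
    rw [motzkinGF_succ_natCast_add_one, ih (by omega)]
    norm_cast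
    rw [ih (by omega), ih (by omega)]
    ring

lemma motzkinGF_natCast_self (n : ℕ) : motzkinGF s t n n = 1 := by
  induction n with
  | zero => simp [motzkinGF]
  | succ n ih =>
    push_cast
    rw [motzkinGF_succ_natCast_add_one, ih]
    norm_cast
    rw [motzkinGF_natCast_eq_zero_of_lt s t (by omega),
      motzkinGF_natCast_eq_zero_of_lt s t (by omega)]
    ring

end Motzkin

noncomputable def motzkinMoment (s t : ℕ → ℝ) : ℝ[X] →ₗ[ℝ] ℝ :=
  lsum fun j => LinearMap.id.smulRight (motzkinGF s t j 0)

noncomputable def orthoPoly (s t : ℕ → ℝ) : ℕ → ℝ[X]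
  | 0 => 1
  | 1 => X - C (s 0)
  | k + 2 => (X - C (s (k + 1))) * orthoPoly s t (k + 1) - C (t k) * orthoPoly s t k

section Moment

variable (s t : ℕ → ℝ)

lemma motzkinMoment_C_mul_X_pow (a : ℝ) (j : ℕ) :
    motzkinMoment s t (C a * X ^ j) = a * motzkinGF s t j 0 := by
  simp [motzkinMoment, C_mul_X_pow_eq_monomial]

lemma motzkinMoment_X_pow (j : ℕ) : motzkinMoment s t (X ^ j) = motzkinGF s t j 0 := by
  simpa using motzkinMoment_C_mul_X_pow s t 1 j

lemma motzkinMoment_X_pow_mul_eq_sum {N : ℕ} {q : ℝ[X]} (hq : q.natDegree < N) (i : ℕ) :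
    motzkinMoment s t (X ^ i * q) = ∑ r : Fin N, motzkinGF s t (i + r) 0 * q.coeff r := by
  conv_lhs => rw [q.as_sum_range' N hq]
  simp only [Finset.mul_sum, map_sum, ← C_mul_X_pow_eq_monomial,
    Fin.sum_univ_eq_sum_range (fun r => motzkinGF s t (i + r) 0 * q.coeff r)]
  refine Finset.sum_congr rfl fun r _ => ?_
  rw [mul_left_comm, ← pow_add, motzkinMoment_C_mul_X_pow, mul_comm]

lemma orthoPoly_monic_and_natDegree (k : ℕ) :
    (orthoPoly s t k).Monic ∧ (orthoPoly s t k).natDegree = k := by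
  induction k using Nat.twoStepInduction with
  | zero => exact ⟨monic_one, natDegree_one⟩
  | one => exact ⟨monic_X_sub_C _, natDegree_X_sub_C _⟩
  | more k ih ih' =>
    have hlead : ((X - C (s (k + 1))) * orthoPoly s t (k + 1)).natDegree = k + 2 := by
      rw [(monic_X_sub_C _).natDegree_mul ih'.1, natDegree_X_sub_C, ih'.2, add_comm]
    have hlow : (C (t k) * orthoPoly s t k).natDegree < k + 2 :=
      (natDegree_C_mul_le _ _).trans_lt (by omega)
    rw [← hlead] at hlow
    exact ⟨((monic_X_sub_C _).mul ih'.1).sub_of_left (degree_lt_degree hlow),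
      (natDegree_sub_eq_left_of_natDegree_lt hlow).trans hlead⟩

lemma orthoPoly_monic (k : ℕ) : (orthoPoly s t k).Monic :=
  (orthoPoly_monic_and_natDegree s t k).1

lemma natDegree_orthoPoly (k : ℕ) : (orthoPoly s t k).natDegree = k :=
  (orthoPoly_monic_and_natDegree s t k).2

lemma coeff_orthoPoly_self (k : ℕ) : (orthoPoly s t k).coeff k = 1 := by
  simpa [natDegree_orthoPoly] using (orthoPoly_monic s t k).coeff_natDegree

lemma motzkinMoment_X_pow_mul_orthoPoly (i k : ℕ) :
    motzkinMoment s t (X ^ i * orthoPoly s t k) = (∏ j ∈ range k, t j) * motzkinGF s t i k := by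
  induction k using Nat.twoStepInduction generalizing i with
  | zero => simp [orthoPoly, motzkinMoment_X_pow]
  | one =>
    have hX : X ^ i * orthoPoly s t 1 = X ^ (i + 1) - s 0 • X ^ i := by
      simp only [orthoPoly, smul_eq_C_mul]
      ring
    rw [hX, map_sub, map_smul, motzkinMoment_X_pow, motzkinMoment_X_pow, motzkinGF_succ_zero]
    simp
  | more k ih ih' =>
    have hX : X ^ i * orthoPoly s t (k + 2) = X ^ (i + 1) * orthoPoly s t (k + 1)
        - s (k + 1) • (X ^ i * orthoPoly s t (k + 1)) - t k • (X ^ i * orthoPoly s t k) := by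
      simp only [orthoPoly, smul_eq_C_mul]
      ring
    rw [hX, map_sub, map_sub, map_smul, map_smul, ih', ih', ih]
    push_cast
    rw [motzkinGF_succ_natCast_add_one]
    simp only [smul_eq_mul, prod_range_succ]
    ring

lemma det_motzkinMoment_X_pow_add_mul_orthoPoly (n m : ℕ) :
    (of fun a' a : Fin m => motzkinMoment s t (X ^ (n + a') * orthoPoly s t (n + a))).det
      = ∏ a : Fin m, ∏ j ∈ range (n + a), t j := by
  simp only [motzkinMoment_X_pow_mul_orthoPoly]
  rw [det_of_isLowerTriangular _ fun a' a (h : a' < a) => by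
    rw [of_apply, motzkinGF_natCast_eq_zero_of_lt s t (by simpa using h), mul_zero]]
  exact prod_congr rfl fun a _ => by rw [of_apply, motzkinGF_natCast_self, mul_one]

lemma hankel_mul_coeffMatrix {κ : Type*} {N : ℕ} {q : κ → ℝ[X]}
    (hq : ∀ c, (q c).natDegree < N) :
    hankel (fun j => motzkinGF s t j 0) N * coeffMatrix N q
      = of fun (i : Fin N) c => motzkinMoment s t (X ^ (i : ℕ) * q c) := by
  ext i c
  rw [of_apply, motzkinMoment_X_pow_mul_eq_sum s t (hq c)]
  rfl

/-- The coefficient matrix of `p_0, …, p_{N-1}` is unitriangular and turns the Hankel matrix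
into the unitriangular matrix `(m(i, k))` times the diagonal of the `t_0 ⋯ t_{k-1}`. -/
theorem det_hankel_motzkinGF (N : ℕ) :
    (hankel (fun j => motzkinGF s t j 0) N).det = ∏ k ∈ range N, ∏ j ∈ range k, t j := by
  set K := coeffMatrix N fun k : Fin N => orthoPoly s t k
  set A := of fun i k : Fin N => motzkinGF s t (i : ℕ) (k : ℕ)
  have hfactor : hankel (fun j => motzkinGF s t j 0) N * K
      = A * diagonal fun k : Fin N => ∏ j ∈ range k, t j := by
    rw [hankel_mul_coeffMatrix s t fun k : Fin N => (natDegree_orthoPoly s t k).trans_lt k.isLt]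
    ext i k
    simp only [A, of_apply, mul_diagonal, motzkinMoment_X_pow_mul_orthoPoly]
    ring
  have hK : K.det = 1 := by
    rw [det_of_isUpperTriangular (M := K) fun i j (hij : j < i) =>
      coeff_eq_zero_of_natDegree_lt ((natDegree_orthoPoly s t j).trans_lt hij)]
    exact prod_eq_one fun k _ => coeff_orthoPoly_self s t k
  have hA : A.det = 1 := by
    rw [det_of_isLowerTriangular A fun i k hik => motzkinGF_natCast_eq_zero_of_lt s t hik]
    simp [A, motzkinGF_natCast_self]
  rw [← mul_one (det _), ← hK, ← det_mul, hfactor, det_mul, hA, det_diagonal, one_mul,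
    Fin.prod_univ_eq_prod_range (fun k => ∏ j ∈ range k, t j)]

end Moment

def coeffEvalMatrix {R : Type*} [CommRing R] (n : ℕ) {m : ℕ} (y : Fin m → R) :
    Matrix (Fin n ⊕ Fin m) (Fin (n + m)) R :=
  fromRows (of fun j r => if r = Fin.addNat j m then 1 else 0) (of fun l r => y l ^ (r : ℕ))

section CoeffEval

variable {R : Type*} [CommRing R] (n : ℕ) {m : ℕ} (y : Fin m → R)

lemma coeffEvalMatrix_mul_coeffMatrix {κ : Type*} {q : κ → R[X]}
    (hq : ∀ c, (q c).natDegree < n + m) :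
    coeffEvalMatrix n y * coeffMatrix (n + m) q
      = fromRows (of fun (j : Fin n) c => (q c).coeff (j + m)) (of fun l c => (q c).eval (y l)) := by
  rw [coeffEvalMatrix, fromRows_mul, pow_mul_coeffMatrix y hq]
  congr 1
  ext j c
  simp [mul_apply, coeffMatrix]

/-- Listing the degrees as `m, …, n + m - 1, 0, …, m - 1` (a rotation by `m`) makes
`coeffEvalMatrix` block triangular with the Vandermonde matrix as a diagonal block. -/
lemma det_coeffEvalMatrix_submatrix :
    ((coeffEvalMatrix n y).submatrix id finSumFinEquiv).det
      = (-1) ^ (m * n) * (vandermonde y).det := by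
  have hrot : (coeffEvalMatrix n y).submatrix id (⇑(finRotate (n + m) ^ m) ∘ finSumFinEquiv)
      = fromBlocks 1 0 (of fun l (j : Fin n) => y l ^ ((j : ℕ) + m)) (vandermonde y) := by
    ext (j | l) (j' | a)
    · simp [coeffEvalMatrix, Fin.ext_iff, coe_finRotate_pow_castAdd, one_apply, eq_comm]
    · simp only [coeffEvalMatrix, submatrix_apply, id_eq, Function.comp_apply,
        finSumFinEquiv_apply_right, fromRows_apply_inl, of_apply, fromBlocks_apply₁₂,
        Matrix.zero_apply, ite_eq_right_iff, Fin.ext_iff, coe_finRotate_pow_natAdd, Fin.val_addNat]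
      omega
    · simp [coeffEvalMatrix, coe_finRotate_pow_castAdd]
    · simp [coeffEvalMatrix, coe_finRotate_pow_natAdd, vandermonde]
  have h := det_submatrix_id_perm_comp (coeffEvalMatrix n y) finSumFinEquiv
    (finRotate (n + m) ^ m)
  rw [hrot, det_fromBlocks_zero₁₂, det_one, one_mul, sign_finRotate_pow] at h
  push_cast at h
  rw [h, ← mul_assoc, ← pow_add, Even.neg_one_pow ⟨_, rfl⟩, one_mul]

end CoeffEval

section Christoffel

variable (s t : ℕ → ℝ) (n : ℕ) {m : ℕ} (y : Fin m → ℝ)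

noncomputable def christoffelFamily : Fin n ⊕ Fin m → ℝ[X] :=
  Sum.elim (fun j => (∏ l, (X - C (y l))) * X ^ (j : ℕ)) fun a => orthoPoly s t (n + a)

noncomputable def christoffelMatrix : Matrix (Fin n ⊕ Fin m) (Fin n ⊕ Fin m) ℝ :=
  (coeffMatrix (n + m) (christoffelFamily s t n y)).submatrix finSumFinEquiv id

lemma natDegree_christoffelFamily_lt (c : Fin n ⊕ Fin m) :
    (christoffelFamily s t n y c).natDegree < n + m := by
  rcases c with j | a
  · simp only [christoffelFamily, Sum.elim_inl, natDegree_prod_X_sub_C_mul_X_pow]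
    omega
  · simp only [christoffelFamily, Sum.elim_inr, natDegree_orthoPoly]
    omega

lemma det_hankel_mul_det_christoffelMatrix :
    (hankel (fun j => motzkinGF s t j 0) n).det * (∏ a : Fin m, ∏ j ∈ range (n + a), t j)
        * (christoffelMatrix s t n y).det
      = (hankel (fun k => motzkinMoment s t (X ^ k * ∏ l, (X - C (y l)))) n).det
        * ∏ a : Fin m, ∏ j ∈ range (n + a), t j := by
  set H := hankel (fun j => motzkinGF s t j 0) (n + m)
  set M := H.submatrix finSumFinEquiv id * coeffMatrix (n + m) (christoffelFamily s t n y)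
  have hM (ρ c) : M ρ c =
      motzkinMoment s t (X ^ (finSumFinEquiv ρ : ℕ) * christoffelFamily s t n y c) :=
    congrFun₂ (hankel_mul_coeffMatrix s t (natDegree_christoffelFamily_lt s t n y)) _ c
  have hH : H.det = (hankel (fun j => motzkinGF s t j 0) n).det
      * ∏ a : Fin m, ∏ j ∈ range (n + a), t j := by
    rw [det_hankel_motzkinGF, det_hankel_motzkinGF, prod_range_add,
      Fin.prod_univ_eq_prod_range (fun a => ∏ j ∈ range (n + a), t j)]
  have h₁₁ :
      M.toBlocks₁₁ = hankel (fun k => motzkinMoment s t (X ^ k * ∏ l, (X - C (y l)))) n := by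
    ext i j
    rw [toBlocks₁₁, of_apply, hM, hankel, of_apply]
    simp only [christoffelFamily, Sum.elim_inl, finSumFinEquiv_apply_left, Fin.val_castAdd]
    congr 1
    ring
  have h₁₂ : M.toBlocks₁₂ = 0 := by
    ext i a
    rw [toBlocks₁₂, of_apply, hM]
    simp only [christoffelFamily, Sum.elim_inr, finSumFinEquiv_apply_left, Fin.val_castAdd,
      motzkinMoment_X_pow_mul_orthoPoly]
    rw [motzkinGF_natCast_eq_zero_of_lt s t (by omega), mul_zero, Matrix.zero_apply]
  have h₂₂ : M.toBlocks₂₂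
      = of fun a' a : Fin m => motzkinMoment s t (X ^ (n + a') * orthoPoly s t (n + a)) := by
    ext a' a
    rw [toBlocks₂₂, of_apply, hM]
    rfl
  calc _ = H.det * (christoffelMatrix s t n y).det := by rw [hH]
    _ = M.det := by
      rw [det_mul_eq_det_submatrix_mul_det_submatrix _ _ finSumFinEquiv, submatrix_submatrix,
        Function.comp_id, Function.id_comp, det_submatrix_equiv_self]
      rfl
    _ = _ := by
      rw [det_of_toBlocks₁₂_eq_zero M h₁₂, h₁₁, h₂₂, det_motzkinMoment_X_pow_add_mul_orthoPoly]

lemma det_vandermonde_mul_det_christoffelMatrix :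
    (vandermonde y).det * (christoffelMatrix s t n y).det
      = (-1) ^ (m * n) * (of fun l a : Fin m => (orthoPoly s t (n + a)).eval (y l)).det := by
  set q := christoffelFamily s t n y
  have h := det_mul_eq_det_submatrix_mul_det_submatrix (coeffEvalMatrix n y)
    (coeffMatrix (n + m) q) finSumFinEquiv
  rw [coeffEvalMatrix_mul_coeffMatrix n y (natDegree_christoffelFamily_lt s t n y),
    det_coeffEvalMatrix_submatrix] at h
  set F := fromRows (of fun (j : Fin n) c => (q c).coeff (j + m)) (of fun l c => (q c).eval (y l))
  have h₁₁ : F.toBlocks₁₁.det = 1 := by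
    have hentry (j j' : Fin n) :
        F.toBlocks₁₁ j j' = ((∏ l, (X - C (y l))) * X ^ (j' : ℕ)).coeff (j + m) := rfl
    rw [det_of_isUpperTriangular fun j j' (h : j' < j) => by
      rw [hentry, coeff_eq_zero_of_natDegree_lt]
      rw [natDegree_prod_X_sub_C_mul_X_pow, add_comm]
      exact Nat.add_lt_add_right h m]
    refine prod_eq_one fun j _ => ?_
    rw [hentry, add_comm, ← natDegree_prod_X_sub_C_mul_X_pow y j]
    exact ((monic_prod_X_sub_C _ _).mul (monic_X_pow _)).coeff_natDegree
  have h₂₁ : F.toBlocks₂₁ = 0 := by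
    ext l j
    change ((∏ l, (X - C (y l))) * X ^ (j : ℕ)).eval (y l) = 0
    rw [eval_mul, eval_prod, prod_eq_zero (mem_univ l) (by rw [eval_sub, eval_X, eval_C, sub_self]),
      zero_mul]
  have h₂₂ : F.toBlocks₂₂ = of fun l a : Fin m => (orthoPoly s t (n + a)).eval (y l) := rfl
  rw [det_of_toBlocks₂₁_eq_zero F h₂₁, h₁₁, one_mul, h₂₂] at h
  change _ = _ * (christoffelMatrix s t n y).det at h
  have hsq : ((-1 : ℝ) ^ (m * n)) ^ 2 = 1 := by
    rw [← pow_mul, Even.neg_one_pow ⟨m * n, by ring⟩]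
  linear_combination (-(-1 : ℝ) ^ (m * n)) * h
    - (vandermonde y).det * (christoffelMatrix s t n y).det * hsq

/-- Christoffel's formula for the moments modified by `∏ (X - y_l)`. -/
theorem det_hankel_motzkinMoment_mul_prod_X_sub_C (ht : ∀ k < n + m, t k ≠ 0) :
    (hankel (fun k => motzkinMoment s t (X ^ k * ∏ l, (X - C (y l)))) n).det
        * (vandermonde y).det
      = (-1) ^ (m * n) * (of fun l a : Fin m => (orthoPoly s t (n + a)).eval (y l)).det
        * (hankel (fun j => motzkinGF s t j 0) n).det := by
  have hnorm : ∏ a : Fin m, ∏ j ∈ range (n + a), t j ≠ 0 :=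
    prod_ne_zero_iff.2 fun a _ => prod_ne_zero_iff.2 fun j hj =>
      ht j ((mem_range.1 hj).trans (Nat.add_lt_add_left a.isLt n))
  have hmoment := det_hankel_mul_det_christoffelMatrix s t n y
  rw [mul_right_comm] at hmoment
  rw [← mul_right_cancel₀ hnorm hmoment]
  linear_combination (hankel (fun j => motzkinGF s t j 0) n).det
    * det_vandermonde_mul_det_christoffelMatrix s t n y

end Christoffel

noncomputable def scaledChebU (sc tc : ℝ) (k : ℤ) (x : ℝ) : ℝ :=
  √tc ^ k * chebU k ((x + sc) / (2 * √tc))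

section Chebyshev

variable (sc : ℝ) {tc : ℝ}

lemma scaledChebU_add_two (htc : 0 < tc) (k : ℤ) (x : ℝ) :
    scaledChebU sc tc (k + 2) x
      = (x + sc) * scaledChebU sc tc (k + 1) x - tc * scaledChebU sc tc k x := by
  have hsqrt : √tc ≠ 0 := (Real.sqrt_pos.mpr htc).ne'
  set X₀ := (x + sc) / (2 * √tc)
  have hX₀ : 2 * X₀ * √tc = x + sc := by
    simp only [X₀]
    field_simp
  simp only [scaledChebU, chebU, Chebyshev.U_add_two, eval_sub, eval_mul, eval_ofNat, eval_X,
    zpow_add₀ hsqrt, zpow_ofNat, pow_one]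
  linear_combination (√tc ^ k * √tc * eval X₀ (Chebyshev.U ℝ (k + 1))) * hX₀
    - (√tc ^ k * eval X₀ (Chebyshev.U ℝ k)) * Real.sq_sqrt htc.le

lemma scaledChebU_neg_one (x : ℝ) : scaledChebU sc tc (-1) x = 0 := by
  simp [scaledChebU, chebU]

lemma scaledChebU_zero (x : ℝ) : scaledChebU sc tc 0 x = 1 := by
  simp [scaledChebU, chebU]

lemma scaledChebU_one (htc : 0 < tc) (x : ℝ) : scaledChebU sc tc 1 x = x + sc := by
  have hsqrt : √tc ≠ 0 := (Real.sqrt_pos.mpr htc).ne'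
  simp only [scaledChebU, chebU, zpow_one, Chebyshev.U_one, eval_mul, eval_ofNat, eval_X]
  field_simp

lemma Fcheb_eq_scaledChebU (s₀ t₀ : ℝ) (n e : ℕ) (x : ℝ) :
    Fcheb s₀ t₀ sc tc n e x = scaledChebU sc tc (n + e) x
      - (sc - s₀) * scaledChebU sc tc (n + e - 1) x
      + (tc - t₀) * scaledChebU sc tc (n + e - 2) x := by
  simp only [Fcheb, scaledChebU, mul_assoc]

end Chebyshev

section ConstantTail

variable {s t : ℕ → ℝ} {sc tc : ℝ}

lemma orthoPoly_eval_neg (hs : ∀ i, 1 ≤ i → s i = sc) (htt : ∀ i, 1 ≤ i → t i = tc)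
    (htc : 0 < tc) (x : ℝ) (k : ℕ) :
    (orthoPoly s t (k + 1)).eval (-x) = (-1) ^ (k + 1) * (scaledChebU sc tc (k + 1) x
      - (sc - s 0) * scaledChebU sc tc k x + (tc - t 0) * scaledChebU sc tc (k - 1) x) := by
  induction k using Nat.twoStepInduction with
  | zero =>
    simp only [orthoPoly, eval_sub, eval_X, eval_C, Nat.cast_zero, zero_add, zero_sub,
      scaledChebU_one sc htc, scaledChebU_zero, scaledChebU_neg_one]
    ring
  | one =>
    have h₂ : scaledChebU sc tc 2 x = (x + sc) * (x + sc) - tc := by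
      simpa [scaledChebU_one sc htc, scaledChebU_zero] using scaledChebU_add_two sc htc 0 x
    simp only [orthoPoly, eval_sub, eval_mul, eval_X, eval_C, eval_one, hs 1 le_rfl, Nat.cast_one,
      one_add_one_eq_two, sub_self, h₂, scaledChebU_one sc htc, scaledChebU_zero]
    ring
  | more k ih ih' =>
    have h₀ := scaledChebU_add_two sc htc (k + 1) x
    have h₁ := scaledChebU_add_two sc htc k x
    have h₂ := scaledChebU_add_two sc htc (k - 1) x
    have hp : (orthoPoly s t (k + 2 + 1)).eval (-x)
        = (-x - sc) * (orthoPoly s t (k + 1 + 1)).eval (-x) - tc * (orthoPoly s t (k + 1)).eval (-x) := by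
      simp [orthoPoly, hs (k + 2) (by omega), htt (k + 1) (by omega)]
    rw [hp, ih, ih']
    push_cast
    ring_nf at h₀ h₁ h₂ ⊢
    linear_combination (-1) ^ k * (h₀ - (sc - s 0) * h₁ + (tc - t 0) * h₂)

lemma orthoPoly_eval_neg_eq_Fcheb (hs : ∀ i, 1 ≤ i → s i = sc) (htt : ∀ i, 1 ≤ i → t i = tc)
    (htc : 0 < tc) {n : ℕ} (hn : 0 < n) (e : ℕ) (x : ℝ) :
    (orthoPoly s t (n + e)).eval (-x) = (-1) ^ (n + e) * Fcheb (s 0) (t 0) sc tc n e x := by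
  obtain ⟨k, hk⟩ : ∃ k, n + e = k + 1 := ⟨n + e - 1, by omega⟩
  have hk' : (n : ℤ) + e = k + 1 := by exact_mod_cast hk
  rw [hk, orthoPoly_eval_neg hs htt htc, Fcheb_eq_scaledChebU, hk']
  ring_nf

lemma det_orthoPoly_eval_neg (hs : ∀ i, 1 ≤ i → s i = sc) (htt : ∀ i, 1 ≤ i → t i = tc)
    (htc : 0 < tc) {n : ℕ} (hn : 0 < n) {m : ℕ} (x : Fin m → ℝ) :
    (of fun l a : Fin m => (orthoPoly s t (n + a)).eval (-x l)).det
      = (∏ a : Fin m, (-1) ^ (n + (a : ℕ)))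
        * (of fun l a : Fin m => Fcheb (s 0) (t 0) sc tc n a (x l)).det := by
  simp only [orthoPoly_eval_neg_eq_Fcheb hs htt htc hn]
  exact det_mul_row (fun a : Fin m => (-1 : ℝ) ^ (n + (a : ℕ))) _

end ConstantTail

lemma motzkinMoment_X_pow_mul_cubic (s t : ℕ → ℝ) (k : ℕ) (α β γ : ℝ) :
    motzkinMoment s t (X ^ k * ∏ l, (X - C (-![α, β, γ] l)))
      = α * β * γ * motzkinGF s t k 0 + (α * β + β * γ + γ * α) * motzkinGF s t (k + 1) 0
        + (α + β + γ) * motzkinGF s t (k + 2) 0 + motzkinGF s t (k + 3) 0 := by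
  have hw : X ^ k * ∏ l, (X - C (-![α, β, γ] l)) = C (α * β * γ) * X ^ k
      + C (α * β + β * γ + γ * α) * X ^ (k + 1) + C (α + β + γ) * X ^ (k + 2) + X ^ (k + 3) := by
    simp only [Fin.prod_univ_three, cons_val_zero, cons_val_one, cons_val_two, head_cons,
      tail_cons, C_neg, C_add, C_mul]
    ring
  rw [hw, map_add, map_add, map_add, motzkinMoment_C_mul_X_pow, motzkinMoment_C_mul_X_pow,
    motzkinMoment_C_mul_X_pow, motzkinMoment_X_pow]

/-- Corollary 6: if `s_i = s` and `t_i = t` for `i ≥ 1` with `t > 0`, then for `n ≥ 1`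
and real `α, β, γ`,
`det(αβγ m_{i+j} + (αβ+βγ+γα) m_{i+j+1} + (α+β+γ) m_{i+j+2} + m_{i+j+3})·(β-α)(γ-α)(γ-β)
  = det(F_j(x_i))_{i,j=0}^{2} · det(m_{i+j})_{i,j=0}^{n-1}`, where `(x₀,x₁,x₂) = (α,β,γ)`. -/
theorem hankel_four_term_moments_chebyshev (s t : ℕ → ℝ) (ht : ∀ n, t n ≠ 0)
    (sc tc : ℝ) (htc : 0 < tc)
    (hs : ∀ i, 1 ≤ i → s i = sc) (htt : ∀ i, 1 ≤ i → t i = tc)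
    (n : ℕ) (hn : 0 < n) (α β γ : ℝ) :
    Matrix.det (Matrix.of fun i j : Fin n =>
        α * β * γ * motzkinGF s t ((i : ℕ) + (j : ℕ)) 0
          + (α * β + β * γ + γ * α) * motzkinGF s t ((i : ℕ) + (j : ℕ) + 1) 0
          + (α + β + γ) * motzkinGF s t ((i : ℕ) + (j : ℕ) + 2) 0
          + motzkinGF s t ((i : ℕ) + (j : ℕ) + 3) 0)
      * ((β - α) * (γ - α) * (γ - β))
      = Matrix.det (Matrix.of fun i j : Fin 3 =>
          Fcheb (s 0) (t 0) sc tc n (j : ℕ) (![α, β, γ] i))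
        * Matrix.det (Matrix.of fun i j : Fin n =>
            motzkinGF s t ((i : ℕ) + (j : ℕ)) 0) := by
  have key := det_hankel_motzkinMoment_mul_prod_X_sub_C s t n (m := 3) (fun l => -![α, β, γ] l)
    fun k _ => ht k
  have hV : (vandermonde fun l => -![α, β, γ] l).det = -((β - α) * (γ - α) * (γ - β)) := by
    simp only [det_fin_three, vandermonde, of_apply, Fin.val_zero, Fin.val_one, Fin.val_two,
      cons_val_zero, cons_val_one, cons_val_two, head_cons, tail_cons]
    ring
  simp only [hankel, motzkinMoment_X_pow_mul_cubic] at key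
  rw [det_orthoPoly_eval_neg hs htt htc hn, Fin.prod_univ_three, Fin.val_zero, Fin.val_one,
    Fin.val_two, hV] at key
  have hsq : ((-1 : ℝ) ^ (3 * n)) ^ 2 = 1 := by rw [← pow_mul, Even.neg_one_pow ⟨3 * n, by ring⟩]
  linear_combination -key + (of fun i j : Fin 3 => Fcheb (s 0) (t 0) sc tc n j (![α, β, γ] i)).det
    * (of fun i j : Fin n => motzkinGF s t ((i : ℕ) + (j : ℕ)) 0).det * hsq
end

section
/- For every positive integer n, the n×n Hankel determinant det(C_{i+j} + C_{i+j+1})_{i,j=0}^{n−1} equals F_{2n+1}. -/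
/-!
The ballot numbers `b n k = C(2n, n+k) - C(2n, n+k+1)` obey the three-term recurrence of the
Jacobi matrix `J` of the Catalan numbers (diagonal `1, 2, 2, …`, off-diagonals `1`): row `n + 1`
of the unitriangular matrix `B = (b i k)` is row `n` of `B J`. Since `J` is symmetric this gives
`∑ₖ b i k * b j k = C (i + j)`, i.e. the Hankel matrices of `(C m)` and `(C (m + 1))` are
`B Bᵀ` and `B J Bᵀ`. Hence the determinant is `det (1 + J)`, a tridiagonal determinant with
diagonal `2, 3, 3, …`, whose continuant recurrence `D (n + 2) = 3 D (n + 1) - D n` is that of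
`F (2n + 1)`.
-/

open Finset Matrix

theorem Nat.choose_add_two_add_two (m k : ℕ) :
    (m + 2).choose (k + 2) = m.choose k + 2 * m.choose (k + 1) + m.choose (k + 2) := by
  simp only [Nat.choose_succ_succ]
  ring

theorem Nat.fib_add_four_add_fib (m : ℕ) : fib (m + 4) + fib m = 3 * fib (m + 2) := by
  simp only [Nat.fib_add_two]
  ring

def ballot (n k : ℕ) : ℤ := (2 * n).choose (n + k) - (2 * n).choose (n + k + 1)

theorem ballot_eq_zero_of_lt {n k : ℕ} (h : n < k) : ballot n k = 0 := by
  simp [ballot, Nat.choose_eq_zero_of_lt (show 2 * n < n + k by omega),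
    Nat.choose_eq_zero_of_lt (show 2 * n < n + k + 1 by omega)]

theorem ballot_self (n : ℕ) : ballot n n = 1 := by
  simp [ballot, ← two_mul]

theorem ballot_zero_right (n : ℕ) : ballot n 0 = catalan n := by
  have hcat : ((n + 1 : ℕ) : ℤ) * catalan n = (2 * n).choose n := by
    exact_mod_cast succ_mul_catalan_eq_centralBinom n
  have hchoose : ((2 * n).choose (n + 1) : ℤ) * (n + 1) = (2 * n).choose n * n := by
    have := Nat.choose_succ_right_eq (2 * n) n
    rw [show 2 * n - n = n by omega] at this
    exact_mod_cast this
  apply mul_left_cancel₀ (show ((n + 1 : ℕ) : ℤ) ≠ 0 by positivity)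
  rw [hcat, ballot]
  push_cast
  linear_combination -hchoose

theorem ballot_succ_zero (n : ℕ) : ballot (n + 1) 0 = ballot n 0 + ballot n 1 := by
  have hmid : ((2 * n + 2).choose (n + 1) : ℤ) =
      2 * ((2 * n).choose n + (2 * n).choose (n + 1)) := by
    rw [Nat.choose_succ_succ', ← Nat.choose_symm_half, Nat.choose_succ_succ' (2 * n) n]
    push_cast
    ring
  have hout : ((2 * n + 2).choose (n + 2) : ℤ) =
      (2 * n).choose n + 2 * (2 * n).choose (n + 1) + (2 * n).choose (n + 2) := by
    exact_mod_cast Nat.choose_add_two_add_two (2 * n) n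
  simp only [ballot, show 2 * (n + 1) = 2 * n + 2 by ring, show n + 1 + 0 + 1 = n + 2 by ring,
    add_zero]
  linear_combination hmid - hout

theorem ballot_succ_succ (n k : ℕ) :
    ballot (n + 1) (k + 1) = ballot n k + 2 * ballot n (k + 1) + ballot n (k + 2) := by
  have h₁ : ((2 * n + 2).choose (n + k + 2) : ℤ) = (2 * n).choose (n + k) +
      2 * (2 * n).choose (n + k + 1) + (2 * n).choose (n + k + 2) := by
    exact_mod_cast Nat.choose_add_two_add_two (2 * n) (n + k)
  have h₂ : ((2 * n + 2).choose (n + k + 3) : ℤ) = (2 * n).choose (n + k + 1) +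
      2 * (2 * n).choose (n + k + 2) + (2 * n).choose (n + k + 3) := by
    exact_mod_cast Nat.choose_add_two_add_two (2 * n) (n + k + 1)
  simp only [ballot, show 2 * (n + 1) = 2 * n + 2 by ring,
    show n + 1 + (k + 1) = n + k + 2 by ring, show n + (k + 1) = n + k + 1 by ring,
    show n + (k + 2) = n + k + 2 by ring]
  linear_combination h₁ - h₂

theorem sum_ballot_succ_mul_ballot {i N : ℕ} (hi : i + 1 < N) (j : ℕ) :
    ∑ k ∈ range N, ballot (i + 1) k * ballot j k =
      ∑ k ∈ range N, ballot i k * ballot (j + 1) k := by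
  -- `H 0 = 0` thanks to truncated subtraction
  set H : ℕ → ℤ := fun k => ballot i (k - 1) * ballot j k - ballot i k * ballot j (k - 1)
  have htelescope : ∀ k, ballot (i + 1) k * ballot j k - ballot i k * ballot (j + 1) k =
      H k - H (k + 1) := by
    rintro (_ | k)
    · simp only [H, ballot_succ_zero]
      ring
    · simp only [H, ballot_succ_succ, Nat.add_sub_cancel]
      ring
  have hHN : H N = 0 := by
    simp [H, ballot_eq_zero_of_lt (show i < N by omega),
      ballot_eq_zero_of_lt (show i < N - 1 by omega)]
  rw [← sub_eq_zero, ← sum_sub_distrib, sum_congr rfl fun k _ => htelescope k, sum_range_sub',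
    hHN]
  simp [H]

theorem sum_ballot_mul_ballot {i N : ℕ} (hi : i < N) (j : ℕ) :
    ∑ k ∈ range N, ballot i k * ballot j k = catalan (i + j) := by
  induction i generalizing j with
  | zero =>
    rw [sum_eq_single_of_mem 0 (mem_range.2 hi) fun k _ hk => by
      rw [ballot_eq_zero_of_lt (Nat.pos_of_ne_zero hk), zero_mul]]
    simp [ballot_self, ballot_zero_right]
  | succ i ih =>
    rw [sum_ballot_succ_mul_ballot hi, ih (by omega), Nat.add_right_comm, add_assoc]

section Tridiagonal

variable {R : Type*}

def tridiagonal [Zero R] (a b c : ℕ → R) (n : ℕ) : Matrix (Fin n) (Fin n) R :=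
  of fun i j => if (i : ℕ) = j then a i else if (i : ℕ) + 1 = j then b i else
    if (j : ℕ) + 1 = i then c j else 0

section Apply

variable [Zero R] {a b c : ℕ → R} {n : ℕ} {i j : Fin n}

@[simp]
theorem tridiagonal_apply_self : tridiagonal a b c n i i = a i := by
  simp [tridiagonal]

theorem tridiagonal_apply_of_succ_eq (h : (i : ℕ) + 1 = j) : tridiagonal a b c n i j = b i := by
  simp only [tridiagonal, of_apply]
  split_ifs <;> first | rfl | omega

theorem tridiagonal_apply_of_eq_succ (h : (i : ℕ) = j + 1) : tridiagonal a b c n i j = c j := by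
  simp only [tridiagonal, of_apply]
  split_ifs <;> first | rfl | omega

theorem tridiagonal_apply_eq_zero (h : (i : ℕ) + 1 < j ∨ (j : ℕ) + 1 < i) :
    tridiagonal a b c n i j = 0 := by
  simp only [tridiagonal, of_apply]
  split_ifs <;> first | rfl | omega

end Apply

theorem sum_mul_tridiagonal_apply [NonAssocSemiring R] {a b c x : ℕ → R} {n : ℕ}
    (hx : x n = 0) (l : Fin n) :
    ∑ k : Fin n, x k * tridiagonal a b c n k l =
      (∑ k ∈ range n, if k + 1 = l then x k * b k else 0) + x l * a l + x (l + 1) * c l := by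
  simp only [tridiagonal, of_apply]
  rw [Fin.sum_univ_eq_sum_range (fun k => x k * if k = l then a k else if k + 1 = l then b k else
    if (l : ℕ) + 1 = k then c l else 0)]
  calc _ = ∑ k ∈ range n, ((if k + 1 = l then x k * b k else 0) +
        (if k = l then x l * a l else 0) + if k = l + 1 then x (l + 1) * c l else 0) :=
        sum_congr rfl fun k _ => by split_ifs <;> first | omega | (subst_vars; simp)
    _ = _ := by
      rw [sum_add_distrib, sum_add_distrib, sum_ite_eq', sum_ite_eq']
      by_cases hl : (l : ℕ) + 1 < n
      · simp [hl]
      · simp [show (l : ℕ) + 1 = n by omega, hx]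

theorem det_tridiagonal_succ_succ [CommRing R] (a b c : ℕ → R) (n : ℕ) :
    (tridiagonal a b c (n + 2)).det =
      a (n + 1) * (tridiagonal a b c (n + 1)).det - b n * c n * (tridiagonal a b c n).det := by
  -- the minor of the entry `c n` has last column `b n • Pi.single (Fin.last n) 1`
  have hminor : ((tridiagonal a b c (n + 2)).submatrix
      (Fin.last (n + 1)).succAbove (Fin.last n).castSucc.succAbove).det =
        b n * (tridiagonal a b c n).det := by
    have hsub : ((tridiagonal a b c (n + 2)).submatrix (Fin.last (n + 1)).succAbove
        (Fin.last n).castSucc.succAbove).submatrix (Fin.last n).succAbove (Fin.last n).succAbove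
          = tridiagonal a b c n := by
      ext i j
      simp [tridiagonal, Fin.succAbove_of_castSucc_lt]
    rw [det_succ_column _ (Fin.last n), Fin.sum_univ_castSucc, sum_eq_zero, hsub]
    · simp [tridiagonal_apply_of_succ_eq]
    · intro i _
      rw [submatrix_apply, Fin.succAbove_last, Fin.succAbove_castSucc_self,
        tridiagonal_apply_eq_zero (by simp)]
      simp
  have hsub : (tridiagonal a b c (n + 2)).submatrix (Fin.last (n + 1)).succAbove
      (Fin.last (n + 1)).succAbove = tridiagonal a b c (n + 1) := by
    ext i j
    simp [tridiagonal]
  rw [det_succ_row _ (Fin.last (n + 1)), Fin.sum_univ_castSucc, Fin.sum_univ_castSucc,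
    sum_eq_zero, hminor, hsub]
  · simp [tridiagonal_apply_of_eq_succ]
    ring
  · intro j _
    rw [tridiagonal_apply_eq_zero (by simp)]
    simp

end Tridiagonal

def ballotMatrix (n : ℕ) : Matrix (Fin n) (Fin n) ℤ := of fun i k => ballot i k

def catalanJacobi (n : ℕ) : Matrix (Fin n) (Fin n) ℤ :=
  tridiagonal (fun k => if k = 0 then 1 else 2) 1 1 n

theorem det_ballotMatrix (n : ℕ) : (ballotMatrix n).det = 1 := by
  rw [det_of_isLowerTriangular (ballotMatrix n) fun i j hij => ballot_eq_zero_of_lt hij]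
  simp [ballotMatrix, ballot_self]

theorem ballotMatrix_mul_catalanJacobi (n : ℕ) :
    ballotMatrix n * catalanJacobi n = of fun i k : Fin n => ballot (i + 1) k := by
  ext i ⟨_ | k, hk⟩
  all_goals
    rw [mul_apply]
    simp only [ballotMatrix, catalanJacobi, of_apply]
    rw [sum_mul_tridiagonal_apply (x := ballot i) (ballot_eq_zero_of_lt i.isLt)]
  · simp [ballot_succ_zero]
  · simp [ballot_succ_succ, sum_ite_eq', hk.trans' (Nat.lt_succ_self k)]
    ring

theorem hankel_catalan_eq (n : ℕ) :
    (of fun i j : Fin n => (catalan ((i : ℕ) + (j : ℕ)) : ℤ)) =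
      ballotMatrix n * (ballotMatrix n)ᵀ := by
  ext i j
  rw [mul_apply, of_apply, ← sum_ballot_mul_ballot i.isLt]
  exact (Fin.sum_univ_eq_sum_range (fun k => ballot i k * ballot j k) n).symm

theorem hankel_catalan_succ_eq (n : ℕ) :
    (of fun i j : Fin n => (catalan ((i : ℕ) + (j : ℕ) + 1) : ℤ)) =
      ballotMatrix n * catalanJacobi n * (ballotMatrix n)ᵀ := by
  ext i j
  rw [ballotMatrix_mul_catalanJacobi, mul_apply, of_apply, add_right_comm, add_comm,
    ← sum_ballot_mul_ballot j.isLt]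
  simp only [of_apply, transpose_apply, ballotMatrix, mul_comm (ballot j _)]
  exact (Fin.sum_univ_eq_sum_range (fun k => ballot (i + 1) k * ballot j k) n).symm

theorem hankel_catalan_add_catalan_succ_eq (n : ℕ) :
    (of fun i j : Fin n =>
        (catalan ((i : ℕ) + (j : ℕ)) : ℤ) + (catalan ((i : ℕ) + (j : ℕ) + 1) : ℤ)) =
      ballotMatrix n * (1 + catalanJacobi n) * (ballotMatrix n)ᵀ := by
  rw [mul_add, add_mul, mul_one, ← hankel_catalan_eq, ← hankel_catalan_succ_eq]
  rfl

theorem one_add_catalanJacobi (n : ℕ) :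
    1 + catalanJacobi n = tridiagonal (fun k => if k = 0 then 2 else 3) 1 1 n := by
  ext i j
  simp only [catalanJacobi, tridiagonal, Matrix.add_apply, one_apply, of_apply, Fin.ext_iff]
  split_ifs <;> omega

theorem det_one_add_catalanJacobi (n : ℕ) :
    (1 + catalanJacobi n).det = (Nat.fib (2 * n + 1) : ℤ) := by
  rw [one_add_catalanJacobi]
  induction n using Nat.twoStepInduction with
  | zero => simp
  | one => simp [det_unique, Nat.fib_add_two]
  | more n ih₀ ih₁ =>
    have hfib : (Nat.fib (2 * n + 5) : ℤ) = 3 * Nat.fib (2 * n + 3) - Nat.fib (2 * n + 1) := by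
      have := Nat.fib_add_four_add_fib (2 * n + 1)
      rw [show 2 * n + 5 = 2 * n + 1 + 4 by ring, show 2 * n + 3 = 2 * n + 1 + 2 by ring]
      omega
    rw [det_tridiagonal_succ_succ, ih₀, ih₁, show 2 * (n + 2) + 1 = 2 * n + 5 by ring, hfib]
    simp [show 2 * (n + 1) + 1 = 2 * n + 3 by ring]

theorem hankel_catalan_sum_eq_fib_general (n : ℕ) :
    Matrix.det (Matrix.of fun i j : Fin n =>
        (catalan ((i : ℕ) + (j : ℕ)) : ℤ) + (catalan ((i : ℕ) + (j : ℕ) + 1) : ℤ))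
      = (Nat.fib (2 * n + 1) : ℤ) := by
  rw [hankel_catalan_add_catalan_succ_eq, det_mul, det_mul, det_transpose, det_ballotMatrix,
    det_one_add_catalanJacobi, one_mul, mul_one]

/-- Eq. (1.1): `det(C_{i+j} + C_{i+j+1})_{i,j=0}^{n-1} = F_{2n+1}` for `n ≥ 1`. -/
theorem hankel_catalan_sum_eq_fib (n : ℕ) (hn : 0 < n) :
    Matrix.det (Matrix.of fun i j : Fin n =>
        (catalan ((i : ℕ) + (j : ℕ)) : ℤ) + (catalan ((i : ℕ) + (j : ℕ) + 1) : ℤ))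
      = (Nat.fib (2 * n + 1) : ℤ) :=
  hankel_catalan_sum_eq_fib_general n
end

section
/- For every positive integer n, the n×n Hankel determinant det(C_{i+j+1} + C_{i+j+2})_{i,j=0}^{n−1} equals F_{2n+2}. -/
open Polynomial Finset

open Polynomial Finset

/-- Ballot-type numbers. -/
def bal (i m : ℕ) : ℤ :=
  ((2 * i).choose (i + m) : ℤ) - ((2 * i).choose (i + m + 1) : ℤ)

lemma pascal2 (n t : ℕ) :
    (n + 2).choose (t + 2) = n.choose t + 2 * n.choose (t + 1) + n.choose (t + 2) := by
  rw [Nat.choose_succ_succ (n + 1) (t + 1), Nat.choose_succ_succ n t,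
    Nat.choose_succ_succ n (t + 1)]
  simp only [Nat.succ_eq_add_one, show t + 1 + 1 = t + 2 by omega]
  omega

lemma bal_eq_zero {i m : ℕ} (h : i < m) : bal i m = 0 := by
  unfold bal
  rw [Nat.choose_eq_zero_of_lt (by omega), Nat.choose_eq_zero_of_lt (by omega)]
  simp

lemma bal_self (i : ℕ) : bal i i = 1 := by
  unfold bal
  rw [show i + i = 2 * i by ring, Nat.choose_self, Nat.choose_eq_zero_of_lt (by omega)]
  simp

lemma bal_zero (i : ℕ) : bal i 0 = (catalan i : ℤ) := by
  have h1 : (2 * i).choose (i + 1) * (i + 1) = (2 * i).choose i * i := by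
    have := Nat.choose_succ_right_eq (2 * i) i
    rwa [show 2 * i - i = i by omega] at this
  have h2 : (i + 1) * catalan i = (2 * i).choose i := by
    rw [succ_mul_catalan_eq_centralBinom]; rfl
  have hi : (0:ℤ) < (i:ℤ) + 1 := by positivity
  have : ((i:ℤ) + 1) * bal i 0 = ((i:ℤ) + 1) * (catalan i : ℤ) := by
    unfold bal
    have h1' : ((2 * i).choose (i + 1) : ℤ) * ((i:ℤ) + 1) = ((2 * i).choose i : ℤ) * i := by
      exact_mod_cast congrArg (fun x : ℕ => (x : ℤ)) h1
    have h2' : ((i:ℤ) + 1) * (catalan i : ℤ) = ((2 * i).choose i : ℤ) := by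
      exact_mod_cast congrArg (fun x : ℕ => (x : ℤ)) h2
    simp only [add_zero]
    nlinarith [h1', h2']
  exact mul_left_cancel₀ (by positivity) this

lemma bal_rec1 (i : ℕ) : bal (i + 1) 0 - bal i 0 = bal i 1 := by
  cases i with
  | zero => decide
  | succ j =>
    unfold bal
    have p1 : (2 * (j + 1) + 2).choose (j + 2) =
        (2 * (j + 1)).choose j + 2 * (2 * (j + 1)).choose (j + 1) +
          (2 * (j + 1)).choose (j + 2) := pascal2 (2 * (j + 1)) j
    have p2 : (2 * (j + 1) + 2).choose (j + 3) =
        (2 * (j + 1)).choose (j + 1) + 2 * (2 * (j + 1)).choose (j + 2) +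
          (2 * (j + 1)).choose (j + 3) := pascal2 (2 * (j + 1)) (j + 1)
    have hsym : (2 * (j + 1)).choose j = (2 * (j + 1)).choose (j + 2) := by
      have := Nat.choose_symm (n := 2 * (j + 1)) (k := j + 2) (by omega)
      rwa [show 2 * (j + 1) - (j + 2) = j by omega] at this
    have e1 : 2 * (j + 1) + 2 = 2 * (j + 1 + 1) := by ring
    rw [← e1]
    rw [show j + 1 + 1 + 0 = j + 2 by omega, show j + 1 + 1 + 0 + 1 = j + 3 by omega,
      show j + 1 + 0 = j + 1 by omega, show j + 1 + 0 + 1 = j + 2 by omega,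
      show j + 1 + 1 = j + 2 by omega, show j + 1 + 1 + 1 = j + 3 by omega]
    push_cast [p1, p2, hsym]
    ring

lemma bal_rec2 (i m : ℕ) :
    bal (i + 1) (m + 1) = bal i (m + 2) + 2 * bal i (m + 1) + bal i m := by
  unfold bal
  have p1 : (2 * i + 2).choose (i + m + 2) =
      (2 * i).choose (i + m) + 2 * (2 * i).choose (i + m + 1) +
        (2 * i).choose (i + m + 2) := pascal2 (2 * i) (i + m)
  have p2 : (2 * i + 2).choose (i + m + 3) =
      (2 * i).choose (i + m + 1) + 2 * (2 * i).choose (i + m + 2) +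
        (2 * i).choose (i + m + 3) := pascal2 (2 * i) (i + m + 1)
  rw [show 2 * (i + 1) = 2 * i + 2 by ring,
    show i + 1 + (m + 1) = i + m + 2 by omega, show i + m + 2 + 1 = i + m + 3 by omega]
  push_cast [p1, p2]
  ring


noncomputable def pp : ℕ → Polynomial ℤ
  | 0 => 1
  | 1 => X - 1
  | (k + 2) => (X - 2) * pp (k + 1) - pp k

noncomputable def ss : ℕ → Polynomial ℤ
  | 0 => 1
  | (k + 1) => pp (k + 1) - ss k

noncomputable def rr : ℕ → Polynomial ℤ
  | 0 => 1
  | (k + 1) => ((Nat.fib (2 * k + 4) : ℤ) : Polynomial ℤ) * ss (k + 1) - rr k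

lemma X_mul_ss (k : ℕ) : X * ss k = pp (k + 1) + pp k := by
  induction k with
  | zero =>
    show X * ss 0 = pp 1 + pp 0
    rw [ss, pp, pp]; ring
  | succ k ih =>
    rw [ss, show k + 1 + 1 = k + 2 by rfl, pp]
    rw [mul_sub, ih]
    ring

lemma fib_bisect (k : ℕ) : Nat.fib (2 * k + 6) + Nat.fib (2 * k + 2) = 3 * Nat.fib (2 * k + 4) := by
  have a : Nat.fib (2 * k + 4) = Nat.fib (2 * k + 2) + Nat.fib (2 * k + 3) := by
    have := Nat.fib_add_two (n := 2 * k + 2)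
    simpa [show 2 * k + 2 + 2 = 2 * k + 4 by ring, show 2 * k + 2 + 1 = 2 * k + 3 by ring] using this
  have b : Nat.fib (2 * k + 5) = Nat.fib (2 * k + 3) + Nat.fib (2 * k + 4) := by
    have := Nat.fib_add_two (n := 2 * k + 3)
    simpa [show 2 * k + 3 + 2 = 2 * k + 5 by ring, show 2 * k + 3 + 1 = 2 * k + 4 by ring] using this
  have c : Nat.fib (2 * k + 6) = Nat.fib (2 * k + 4) + Nat.fib (2 * k + 5) := by
    have := Nat.fib_add_two (n := 2 * k + 4)
    simpa [show 2 * k + 4 + 2 = 2 * k + 6 by ring, show 2 * k + 4 + 1 = 2 * k + 5 by ring] using this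
  omega

lemma key_rr (k : ℕ) : (X ^ 2 + X) * rr k =
    ((Nat.fib (2 * k + 2) : ℤ) : Polynomial ℤ) * pp (k + 2)
    + (((Nat.fib (2 * k + 2) : ℤ) : Polynomial ℤ) + ((Nat.fib (2 * k + 4) : ℤ) : Polynomial ℤ))
        * pp (k + 1)
    + ((Nat.fib (2 * k + 4) : ℤ) : Polynomial ℤ) * pp k := by
  induction k with
  | zero =>
    show (X ^ 2 + X) * rr 0 = _
    rw [rr, show (0:ℕ) + 2 = 2 by rfl, show pp 2 = (X - 2) * pp 1 - pp 0 from rfl,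
      show pp 1 = X - 1 from rfl, show pp 0 = 1 from rfl]
    norm_num
    ring
  | succ k ih =>
    have hfibX : ((Nat.fib (2 * k + 6) : ℤ) : Polynomial ℤ) =
        3 * ((Nat.fib (2 * k + 4) : ℤ) : Polynomial ℤ)
          - ((Nat.fib (2 * k + 2) : ℤ) : Polynomial ℤ) := by
      have h := fib_bisect k
      have : ((Nat.fib (2 * k + 6) : ℤ)) = 3 * (Nat.fib (2 * k + 4) : ℤ) - Nat.fib (2 * k + 2) := by
        omega
      exact_mod_cast congrArg (fun z : ℤ => ((z : Polynomial ℤ))) this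
    have hss : (X ^ 2 + X) * ss (k + 1) = (X + 1) * (pp (k + 2) + pp (k + 1)) := by
      calc (X ^ 2 + X) * ss (k + 1) = (X + 1) * (X * ss (k + 1)) := by ring
      _ = _ := by rw [X_mul_ss (k + 1)]
    have hp3 : pp (k + 3) = (X - 2) * pp (k + 2) - pp (k + 1) := by
      rw [show k + 3 = (k + 1) + 2 by rfl, pp]
    have hp2 : pp (k + 2) = (X - 2) * pp (k + 1) - pp k := by rw [pp]
    rw [rr]
    rw [show 2 * (k + 1) + 2 = 2 * k + 4 by ring, show 2 * (k + 1) + 4 = 2 * k + 6 by ring,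
      show k + 1 + 2 = k + 3 by rfl, show k + 1 + 1 = k + 2 by rfl]
    linear_combination ((Nat.fib (2 * k + 4) : ℤ) : Polynomial ℤ) * hss - ih
      - ((Nat.fib (2 * k + 4) : ℤ) : Polynomial ℤ) * hp3
      - ((Nat.fib (2 * k + 4) : ℤ) : Polynomial ℤ) * hp2
      - (pp (k + 2) + pp (k + 1)) * hfibX


noncomputable def Phi (i : ℕ) (q : Polynomial ℤ) : ℤ :=
  q.sum fun j c => (catalan (i + j) : ℤ) * c

lemma Phi_eq {q : Polynomial ℤ} {N : ℕ} (h : ∀ j, N ≤ j → q.coeff j = 0) (i : ℕ) :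
    Phi i q = ∑ j ∈ Finset.range N, (catalan (i + j) : ℤ) * q.coeff j := by
  rw [Phi, Polynomial.sum_def]
  apply Finset.sum_subset
  · intro j hj
    rw [Polynomial.mem_support_iff] at hj
    rw [Finset.mem_range]
    by_contra hc
    exact hj (h j (by omega))
  · intro j _ hj
    rw [Polynomial.notMem_support_iff] at hj
    rw [hj, mul_zero]

lemma Phi_eq_natDegree (q : Polynomial ℤ) (i : ℕ) :
    Phi i q = ∑ j ∈ Finset.range (q.natDegree + 1), (catalan (i + j) : ℤ) * q.coeff j :=
  Phi_eq (fun j hj => Polynomial.coeff_eq_zero_of_natDegree_lt (by omega)) i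

lemma Phi_add (i : ℕ) (q r : Polynomial ℤ) : Phi i (q + r) = Phi i q + Phi i r := by
  unfold Phi
  exact Polynomial.sum_add_index q r _ (fun j => mul_zero _) (fun j b c => mul_add _ _ _)

lemma Phi_intCast_mul (i : ℕ) (a : ℤ) (q : Polynomial ℤ) :
    Phi i (((a : ℤ) : Polynomial ℤ) * q) = a * Phi i q := by
  have h0 : ((a : ℤ) : Polynomial ℤ) * q = a • q := by
    rw [zsmul_eq_mul]
  rw [h0]
  unfold Phi
  rw [Polynomial.sum_smul_index _ _ _ (fun j => mul_zero _), Polynomial.sum_def,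
    Polynomial.sum_def, Finset.mul_sum]
  exact Finset.sum_congr rfl fun j _ => by ring

lemma Phi_one (i : ℕ) : Phi i 1 = (catalan i : ℤ) := by
  unfold Phi
  rw [show (1 : Polynomial ℤ) = Polynomial.C 1 from rfl]
  rw [Polynomial.sum_C_index (by simp)]
  simp

lemma Phi_X_mul (i : ℕ) (q : Polynomial ℤ) : Phi i (X * q) = Phi (i + 1) q := by
  have h : ∀ j, q.natDegree + 2 ≤ j → (X * q).coeff j = 0 := by
    intro j hj
    obtain ⟨j', rfl⟩ : ∃ j', j = j' + 1 := ⟨j - 1, by omega⟩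
    rw [Polynomial.coeff_X_mul]
    exact Polynomial.coeff_eq_zero_of_natDegree_lt (by omega)
  rw [Phi_eq h, Finset.sum_range_succ']
  simp only [Polynomial.coeff_X_mul]
  have hz : (X * q).coeff 0 = 0 := by simp [Polynomial.mul_coeff_zero]
  rw [hz]
  rw [Phi_eq_natDegree]
  simp only [mul_zero, add_zero]
  apply Finset.sum_congr rfl
  intro j _
  rw [show i + (j + 1) = i + 1 + j by omega]

lemma coeff_X_sub_two_mul (q : Polynomial ℤ) (t : ℕ) :
    ((X - 2) * q).coeff (t + 1) = q.coeff t - 2 * q.coeff (t + 1) := by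
  rw [sub_mul, Polynomial.coeff_sub, Polynomial.coeff_X_mul]
  congr 1
  rw [show ((2 : Polynomial ℤ)) = Polynomial.C 2 by norm_num, Polynomial.coeff_C_mul]

lemma pp_coeff_gt : ∀ m j, m < j → (pp m).coeff j = 0
  | 0, j, h => by
    rw [pp, Polynomial.coeff_one]
    simp; omega
  | 1, j, h => by
    rw [pp, Polynomial.coeff_sub, Polynomial.coeff_X, Polynomial.coeff_one]
    have : j ≠ 1 := by omega
    have : j ≠ 0 := by omega
    simp_all
    omega
  | (m + 2), j, h => by
    obtain ⟨t, rfl⟩ : ∃ t, j = t + 1 := ⟨j - 1, by omega⟩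
    rw [pp, Polynomial.coeff_sub, coeff_X_sub_two_mul,
      pp_coeff_gt (m + 1) t (by omega), pp_coeff_gt (m + 1) (t + 1) (by omega),
      pp_coeff_gt m (t + 1) (by omega)]
    ring

lemma pp_coeff_self : ∀ m, (pp m).coeff m = 1
  | 0 => by rw [pp]; simp
  | 1 => by rw [pp]; simp [Polynomial.coeff_one]
  | (m + 2) => by
    rw [pp, Polynomial.coeff_sub, coeff_X_sub_two_mul, pp_coeff_self (m + 1),
      pp_coeff_gt (m + 1) (m + 2) (by omega), pp_coeff_gt m (m + 2) (by omega)]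
    ring

lemma ss_coeff_gt : ∀ k j, k < j → (ss k).coeff j = 0
  | 0, j, h => by rw [ss, Polynomial.coeff_one]; simp; omega
  | (k + 1), j, h => by
    rw [ss, Polynomial.coeff_sub, pp_coeff_gt (k + 1) j h, ss_coeff_gt k j (by omega)]
    ring

lemma ss_coeff_self : ∀ k, (ss k).coeff k = 1
  | 0 => by rw [ss]; simp
  | (k + 1) => by
    rw [ss, Polynomial.coeff_sub, pp_coeff_self (k + 1), ss_coeff_gt k (k + 1) (by omega)]
    ring

lemma coeff_intCast_mul (a : ℤ) (q : Polynomial ℤ) (j : ℕ) :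
    (((a : ℤ) : Polynomial ℤ) * q).coeff j = a * q.coeff j := by
  rw [show ((a : ℤ) : Polynomial ℤ) = Polynomial.C a by simp, Polynomial.coeff_C_mul]

lemma rr_coeff_gt : ∀ k j, k < j → (rr k).coeff j = 0
  | 0, j, h => by rw [rr, Polynomial.coeff_one]; simp; omega
  | (k + 1), j, h => by
    rw [rr, Polynomial.coeff_sub, coeff_intCast_mul, ss_coeff_gt (k + 1) j h,
      rr_coeff_gt k j (by omega)]
    ring

lemma rr_coeff_self : ∀ k, (rr k).coeff k = (Nat.fib (2 * k + 2) : ℤ)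
  | 0 => by rw [rr]; simp
  | (k + 1) => by
    rw [rr, Polynomial.coeff_sub, coeff_intCast_mul, ss_coeff_self (k + 1),
      rr_coeff_gt k (k + 1) (by omega), show 2 * (k + 1) + 2 = 2 * k + 4 by ring]
    ring

lemma Phi_sub (i : ℕ) (q r : Polynomial ℤ) : Phi i (q - r) = Phi i q - Phi i r := by
  have h : q - r = q + ((-1 : ℤ) : Polynomial ℤ) * r := by push_cast; ring
  rw [h, Phi_add, Phi_intCast_mul]
  ring

lemma PhiP : ∀ m i, Phi i (pp m) = bal i m
  | 0, i => by rw [pp, Phi_one, bal_zero]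
  | 1, i => by
    have h : pp 1 = X * 1 - 1 := by rw [pp]; ring
    rw [h, Phi_sub, Phi_X_mul, Phi_one, Phi_one, ← bal_rec1, bal_zero, bal_zero]
  | (m + 2), i => by
    have h : pp (m + 2) = X * pp (m + 1) - (((2 : ℤ) : Polynomial ℤ) * pp (m + 1) + pp m) := by
      rw [pp]; push_cast; ring
    rw [h, Phi_sub, Phi_add, Phi_X_mul, Phi_intCast_mul, PhiP (m + 1) (i + 1),
      PhiP (m + 1) i, PhiP m i, bal_rec2]
    ring

lemma Phi_sq (i : ℕ) (q : Polynomial ℤ) :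
    Phi i ((X ^ 2 + X) * q) = Phi (i + 2) q + Phi (i + 1) q := by
  have h : (X ^ 2 + X) * q = X * (X * q) + X * q := by ring
  rw [h, Phi_add, Phi_X_mul, Phi_X_mul, Phi_X_mul, show i + 1 + 1 = i + 2 by omega]

lemma prod_fib_shift (n : ℕ) :
    (∏ k ∈ Finset.range n, (Nat.fib (2 * k + 4) : ℤ)) =
      (Nat.fib (2 * n + 2) : ℤ) * ∏ k ∈ Finset.range n, (Nat.fib (2 * k + 2) : ℤ) := by
  have h1 := Finset.prod_range_succ (fun k => (Nat.fib (2 * k + 2) : ℤ)) n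
  have h2 := Finset.prod_range_succ' (fun k => (Nat.fib (2 * k + 2) : ℤ)) n
  simp only [show ∀ k : ℕ, 2 * (k + 1) + 2 = 2 * k + 4 from fun k => by ring] at h2
  rw [h2] at h1
  simpa [mul_comm] using h1

/-- Eq. (1.2): `det(C_{i+j+1} + C_{i+j+2})_{i,j=0}^{n-1} = F_{2n+2}` for `n ≥ 1`. -/
theorem hankel_catalan_shifted_sum_eq_fib (n : ℕ) (hn : 0 < n) :
    Matrix.det (Matrix.of fun i j : Fin n =>
        (catalan ((i : ℕ) + (j : ℕ) + 1) : ℤ) + (catalan ((i : ℕ) + (j : ℕ) + 2) : ℤ))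
      = (Nat.fib (2 * n + 2) : ℤ) := by
  set M : Matrix (Fin n) (Fin n) ℤ := Matrix.of fun i j : Fin n =>
      (catalan ((i : ℕ) + (j : ℕ) + 1) : ℤ) + (catalan ((i : ℕ) + (j : ℕ) + 2) : ℤ) with hM
  set V : Matrix (Fin n) (Fin n) ℤ := Matrix.of fun j k : Fin n => (rr (k : ℕ)).coeff (j : ℕ)
    with hV
  have hrrb : ∀ k : Fin n, ∀ j, n ≤ j → (rr (k : ℕ)).coeff j = 0 := fun k j hj =>
    rr_coeff_gt _ _ (lt_of_lt_of_le k.isLt hj)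
  have hMV : ∀ i k : Fin n, (M * V) i k =
      (Nat.fib (2 * (k : ℕ) + 2) : ℤ) * bal (i : ℕ) ((k : ℕ) + 2)
      + ((Nat.fib (2 * (k : ℕ) + 2) : ℤ) + (Nat.fib (2 * (k : ℕ) + 4) : ℤ)) *
          bal (i : ℕ) ((k : ℕ) + 1)
      + (Nat.fib (2 * (k : ℕ) + 4) : ℤ) * bal (i : ℕ) (k : ℕ) := by
    intro i k
    have step1 : (M * V) i k = Phi ((i : ℕ) + 2) (rr (k : ℕ)) + Phi ((i : ℕ) + 1) (rr (k : ℕ)) := by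
      rw [Matrix.mul_apply, Phi_eq (hrrb k) ((i : ℕ) + 2), Phi_eq (hrrb k) ((i : ℕ) + 1),
        ← Finset.sum_add_distrib,
        ← Fin.sum_univ_eq_sum_range (fun j => (catalan ((i : ℕ) + 2 + j) : ℤ) *
            (rr (k : ℕ)).coeff j + (catalan ((i : ℕ) + 1 + j) : ℤ) * (rr (k : ℕ)).coeff j) n]
      apply Finset.sum_congr rfl
      intro j _
      show M i j * V j k = _
      rw [hM, hV]
      simp only [Matrix.of_apply]
      rw [show (i : ℕ) + (j : ℕ) + 1 = (i : ℕ) + 1 + (j : ℕ) by omega,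
        show (i : ℕ) + (j : ℕ) + 2 = (i : ℕ) + 2 + (j : ℕ) by omega]
      ring
    rw [step1, ← Phi_sq, key_rr, Phi_add, Phi_add, Phi_intCast_mul, Phi_intCast_mul]
    have hmid : Phi (i : ℕ) ((((Nat.fib (2 * (k : ℕ) + 2) : ℤ) : Polynomial ℤ)
        + ((Nat.fib (2 * (k : ℕ) + 4) : ℤ) : Polynomial ℤ)) * pp ((k : ℕ) + 1)) =
        ((Nat.fib (2 * (k : ℕ) + 2) : ℤ) + (Nat.fib (2 * (k : ℕ) + 4) : ℤ)) *
          Phi (i : ℕ) (pp ((k : ℕ) + 1)) := by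
      have : ((((Nat.fib (2 * (k : ℕ) + 2) : ℤ) : Polynomial ℤ)
          + ((Nat.fib (2 * (k : ℕ) + 4) : ℤ) : Polynomial ℤ))) =
          ((((Nat.fib (2 * (k : ℕ) + 2) : ℤ) + (Nat.fib (2 * (k : ℕ) + 4) : ℤ) : ℤ)) :
            Polynomial ℤ) := by push_cast; ring
      rw [this, Phi_intCast_mul]
    rw [hmid, PhiP, PhiP, PhiP]
  -- triangularity of M * V
  have hlow : ∀ i k : Fin n, i < k → (M * V) i k = 0 := by
    intro i k h
    rw [hMV i k]
    have h' : (i : ℕ) < (k : ℕ) := h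
    rw [bal_eq_zero (by omega), bal_eq_zero (by omega), bal_eq_zero (by omega)]
    ring
  have hdiag : ∀ k : Fin n, (M * V) k k = (Nat.fib (2 * (k : ℕ) + 4) : ℤ) := by
    intro k
    rw [hMV k k, bal_eq_zero (by omega), bal_eq_zero (by omega), bal_self]
    ring
  have hdetMV : (M * V).det = ∏ k : Fin n, (Nat.fib (2 * (k : ℕ) + 4) : ℤ) := by
    rw [Matrix.det_of_lowerTriangular (M * V) (fun i j hij => hlow i j hij)]
    exact Finset.prod_congr rfl fun k _ => hdiag k
  have hdetV : V.det = ∏ k : Fin n, (Nat.fib (2 * (k : ℕ) + 2) : ℤ) := by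
    rw [Matrix.det_of_upperTriangular (show V.BlockTriangular id from
      fun i j hij => rr_coeff_gt _ _ hij)]
    exact Finset.prod_congr rfl fun k _ => rr_coeff_self (k : ℕ)
  have hprodpos : (∏ k : Fin n, (Nat.fib (2 * (k : ℕ) + 2) : ℤ)) ≠ 0 := by
    apply Finset.prod_ne_zero_iff.mpr
    intro k _
    have := Nat.fib_pos.mpr (show 0 < 2 * (k : ℕ) + 2 by omega)
    positivity
  have hmain : M.det * ∏ k : Fin n, (Nat.fib (2 * (k : ℕ) + 2) : ℤ) =
      (Nat.fib (2 * n + 2) : ℤ) * ∏ k : Fin n, (Nat.fib (2 * (k : ℕ) + 2) : ℤ) := by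
    calc M.det * ∏ k : Fin n, (Nat.fib (2 * (k : ℕ) + 2) : ℤ)
        = M.det * V.det := by rw [hdetV]
      _ = (M * V).det := (Matrix.det_mul M V).symm
      _ = ∏ k : Fin n, (Nat.fib (2 * (k : ℕ) + 4) : ℤ) := hdetMV
      _ = ∏ k ∈ Finset.range n, (Nat.fib (2 * k + 4) : ℤ) :=
          Fin.prod_univ_eq_prod_range (fun k => (Nat.fib (2 * k + 4) : ℤ)) n
      _ = (Nat.fib (2 * n + 2) : ℤ) * ∏ k ∈ Finset.range n, (Nat.fib (2 * k + 2) : ℤ) :=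
          prod_fib_shift n
      _ = (Nat.fib (2 * n + 2) : ℤ) * ∏ k : Fin n, (Nat.fib (2 * (k : ℕ) + 2) : ℤ) := by
          rw [Fin.prod_univ_eq_prod_range (fun k => (Nat.fib (2 * k + 2) : ℤ)) n]
  exact mul_right_cancel₀ hprodpos hmain
end

section
/- For every positive integer n, the n×n Hankel determinant det(C_{i+j} + 2·C_{i+j+1} + C_{i+j+2})_{i,j=0}^{n−1} equals Σ_{j=0}^{n} F_{2j+1}². -/
private def av (i k : ℕ) : ℤ :=
  (Nat.choose (2*i) (i+k) : ℤ) - (Nat.choose (2*i) (i+k+1) : ℤ)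


private lemma av_eq_zero {i k : ℕ} (h : i < k) : av i k = 0 := by
  unfold av
  rw [Nat.choose_eq_zero_of_lt (by omega), Nat.choose_eq_zero_of_lt (by omega)]
  simp

private lemma av_diag (i : ℕ) : av i i = 1 := by
  unfold av
  rw [show i + i = 2*i by ring, Nat.choose_self, Nat.choose_eq_zero_of_lt (by omega)]
  simp

private lemma choose_dd (i m : ℕ) :
    (Nat.choose (2*i+2) (m+2) : ℤ)
      = (Nat.choose (2*i) m : ℤ) + 2 * (Nat.choose (2*i) (m+1) : ℤ)
        + (Nat.choose (2*i) (m+2) : ℤ) := by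
  have h1 : Nat.choose (2*i+2) (m+2) = Nat.choose (2*i+1) (m+1) + Nat.choose (2*i+1) (m+2) :=
    Nat.choose_succ_succ _ _
  have h2 : Nat.choose (2*i+1) (m+1) = Nat.choose (2*i) m + Nat.choose (2*i) (m+1) :=
    Nat.choose_succ_succ _ _
  have h3 : Nat.choose (2*i+1) (m+2) = Nat.choose (2*i) (m+1) + Nat.choose (2*i) (m+2) :=
    Nat.choose_succ_succ _ _
  push_cast [h1, h2, h3]
  ring

private lemma av_recS (i k : ℕ) :
    av (i+1) (k+1) = av i k + 2 * av i (k+1) + av i (k+2) := by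
  unfold av
  have A := choose_dd i (i+k)
  have B := choose_dd i (i+k+1)
  have e1 : 2*(i+1) = 2*i+2 := by ring
  have e2 : i+1+(k+1) = (i+k)+2 := by ring
  have e3 : (i+k)+2+1 = (i+k+1)+2 := by ring
  rw [e1, e2, e3, A, B]
  have e4 : i+(k+1) = i+k+1 := by ring
  have e5 : i+(k+2) = i+k+2 := by ring
  have e6 : i+(k+1)+1 = i+k+2 := by ring
  have e7 : i+(k+2)+1 = i+k+3 := by ring
  have e8 : i+k+1+1 = i+k+2 := by ring
  have e9 : i+k+1+2 = i+k+3 := by ring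
  have e10 : i+k+2+1 = i+k+3 := by ring
  rw [e8, e9, e10]
  ring

private lemma av_rec0 (i : ℕ) : av (i+1) 0 = av i 0 + av i 1 := by
  unfold av
  have e1 : 2*(i+1) = 2*i+2 := by ring
  have e2 : i+1+0 = i+1 := by ring
  have e3 : i+1+0+1 = i+2 := by ring
  have A : (Nat.choose (2*i+2) (i+2) : ℤ)
      = (Nat.choose (2*i) i : ℤ) + 2 * (Nat.choose (2*i) (i+1) : ℤ)
        + (Nat.choose (2*i) (i+2) : ℤ) := choose_dd i i
  have hs : (Nat.choose (2*i+2) (i+1) : ℤ)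
      = 2 * ((Nat.choose (2*i) i : ℤ) + (Nat.choose (2*i) (i+1) : ℤ)) := by
    have h1 : Nat.choose (2*i+2) (i+1) = Nat.choose (2*i+1) i + Nat.choose (2*i+1) (i+1) :=
      Nat.choose_succ_succ _ _
    have hsym : Nat.choose (2*i+1) i = Nat.choose (2*i+1) (i+1) := by
      have h := Nat.choose_symm (n := 2*i+1) (k := i) (by omega)
      rw [show 2*i+1-i = i+1 by omega] at h
      omega
    have h2 : Nat.choose (2*i+1) (i+1) = Nat.choose (2*i) i + Nat.choose (2*i) (i+1) :=
      Nat.choose_succ_succ _ _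
    push_cast [h1, hsym, h2]
    ring
  rw [e1, e2, e3, A, hs]
  have e4 : i+0 = i := by ring
  have e5 : i+0+1 = i+1 := by ring
  have e6 : i+1+1 = i+2 := by ring
  rw [e4, e5, e6]
  ring

private lemma av_catalan (m : ℕ) : av m 0 = catalan m := by
  have hc : (m + 1) * catalan m = Nat.centralBinom m := succ_mul_catalan_eq_centralBinom m
  have hcb : Nat.centralBinom m = Nat.choose (2*m) m := rfl
  have hr : Nat.choose (2*m) (m+1) * (m+1) = Nat.choose (2*m) m * m := by
    have := Nat.choose_succ_right_eq (2*m) m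
    rwa [show 2*m - m = m by omega] at this
  have key : ((m:ℤ)+1) * av m 0 = ((m:ℤ)+1) * (catalan m : ℤ) := by
    unfold av
    rw [show m+0 = m by ring, show m+0+1 = m+1 by ring]
    have h1 : ((m:ℤ)+1) * (Nat.choose (2*m) (m+1) : ℤ) = (Nat.choose (2*m) m : ℤ) * m := by
      have := congrArg (Nat.cast : ℕ → ℤ) hr
      push_cast at this
      linarith [this]
    have h2 : ((m:ℤ)+1) * (catalan m : ℤ) = (Nat.choose (2*m) m : ℤ) := by
      exact_mod_cast congrArg (Nat.cast : ℕ → ℤ) (hc.trans hcb)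
    nlinarith [h1, h2]
  have hne : ((m:ℤ)+1) ≠ 0 := by positivity
  exact mul_left_cancel₀ hne key

open Finset in
private lemma av_transfer (p q M : ℕ) (hp : p ≤ M+1) (hq : q ≤ M+1) :
    ∑ k ∈ range (M+2), av (p+1) k * av q k
      = ∑ k ∈ range (M+2), av p k * av (q+1) k := by
  have E1 : ∑ k ∈ range (M+1), av p (k+2) * av q (k+1)
      = ∑ k ∈ range (M+1), av p (k+1) * av q k - av p 1 * av q 0 := by
    rw [Finset.sum_range_succ (fun k => av p (k+2) * av q (k+1)) M,
      Finset.sum_range_succ' (fun k => av p (k+1) * av q k) M]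
    rw [av_eq_zero (show p < M+2 by omega)]
    simp only [show ∀ k:ℕ, k+1+1 = k+2 from fun k => rfl, show (0:ℕ)+1 = 1 from rfl]
    ring
  have E2 : ∑ k ∈ range (M+1), av p (k+1) * av q (k+2)
      = ∑ k ∈ range (M+1), av p k * av q (k+1) - av p 0 * av q 1 := by
    rw [Finset.sum_range_succ (fun k => av p (k+1) * av q (k+2)) M,
      Finset.sum_range_succ' (fun k => av p k * av q (k+1)) M]
    rw [av_eq_zero (show q < M+2 by omega)]
    simp only [show ∀ k:ℕ, k+1+1 = k+2 from fun k => rfl, show (0:ℕ)+1 = 1 from rfl]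
    ring
  rw [Finset.sum_range_succ' (fun k => av (p+1) k * av q k) (M+1),
    Finset.sum_range_succ' (fun k => av p k * av (q+1) k) (M+1)]
  simp only [av_recS, av_rec0, two_mul, add_mul, mul_add, Finset.sum_add_distrib]
  linarith [E1, E2]

open Finset in
private lemma sum_aa : ∀ p q : ℕ, ∑ k ∈ range (p+q+1), av p k * av q k = catalan (p+q) := by
  intro p
  induction p with
  | zero =>
    intro q
    rw [Finset.sum_eq_single 0]
    · rw [show (0:ℕ)+q = q from by omega, av_diag, one_mul, av_catalan]
    · intro b _ hb
      obtain ⟨b', rfl⟩ := Nat.exists_eq_succ_of_ne_zero hb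
      rw [av_eq_zero (show 0 < b'+1 by omega), zero_mul]
    · intro h
      exact absurd (Finset.mem_range.mpr (by omega)) h
  | succ p ih =>
    intro q
    have h1 : p+1+q+1 = (p+q)+2 := by ring
    rw [h1, av_transfer p q (p+q) (by omega) (by omega)]
    have h2 : (p+q)+2 = p+(q+1)+1 := by ring
    rw [h2, ih (q+1), show p+(q+1) = p+1+q by ring]

open Finset in
private lemma sum_aa_big (i j N : ℕ) (h : i < N) :
    ∑ k ∈ range N, av i k * av j k = catalan (i+j) := by
  have core : ∀ M : ℕ, i < M → ∑ k ∈ range M, av i k * av j k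
      = ∑ k ∈ range (i+1), av i k * av j k := by
    intro M hM
    exact (Finset.sum_subset (Finset.range_subset_range.mpr (by omega))
      (fun k hk hk2 => by
        rw [av_eq_zero (show i < k by simp only [Finset.mem_range] at hk hk2; omega),
          zero_mul])).symm
  rw [core N h, ← core (i+j+1) (by omega), sum_aa]

open Finset in
private lemma sum_aa_big' (i j N : ℕ) (h : j < N) :
    ∑ k ∈ range N, av i k * av j k = catalan (i+j) := by
  simp_rw [mul_comm (av i _) (av j _)]
  rw [sum_aa_big j i N h, Nat.add_comm]

open Finset in
private lemma sum_qq (n i j : ℕ) (hi : i ≤ n) (hj : j ≤ n) :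
    ∑ k ∈ range (n+1), (av i k + av (i+1) k) * (av j k + av (j+1) k)
      = (catalan (i+j) : ℤ) + 2*(catalan (i+j+1) : ℤ) + (catalan (i+j+2) : ℤ)
        - (if i = n ∧ j = n then 1 else 0) := by
  have S1 : ∑ k ∈ range (n+1), av i k * av j k = catalan (i+j) :=
    sum_aa_big i j (n+1) (by omega)
  have S2 : ∑ k ∈ range (n+1), av i k * av (j+1) k = catalan (i+j+1) := by
    rw [sum_aa_big i (j+1) (n+1) (by omega), show i+(j+1) = i+j+1 by omega]
  have S3 : ∑ k ∈ range (n+1), av (i+1) k * av j k = catalan (i+j+1) := by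
    rw [sum_aa_big' (i+1) j (n+1) (by omega), show i+1+j = i+j+1 by omega]
  have S4 : ∑ k ∈ range (n+1), av (i+1) k * av (j+1) k
      = (catalan (i+j+2) : ℤ) - (if i = n ∧ j = n then 1 else 0) := by
    by_cases hij : i = n ∧ j = n
    · rcases hij with ⟨h1, h2⟩
      subst h1
      subst h2
      have hbig : ∑ k ∈ range (j+2), av (j+1) k * av (j+1) k = catalan (j+j+2) := by
        rw [sum_aa_big (j+1) (j+1) (j+2) (by omega), show j+1+(j+1) = j+j+2 by omega]
      rw [Finset.sum_range_succ, av_diag] at hbig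
      rw [if_pos ⟨rfl, rfl⟩, show j+j+2 = j+j+2 from rfl]
      have : (catalan (j+j+2) : ℤ) = catalan (j+j+2) := rfl
      linarith [hbig]
    · rw [if_neg hij]
      rcases Nat.lt_or_ge i n with h | h
      · rw [sum_aa_big (i+1) (j+1) (n+1) (by omega), show i+1+(j+1) = i+j+2 by omega]
        ring
      · have hjn : j < n := by
          rcases Nat.lt_or_ge j n with h2 | h2
          · exact h2
          · exact absurd ⟨by omega, by omega⟩ hij
        rw [sum_aa_big' (i+1) (j+1) (n+1) (by omega), show i+1+(j+1) = i+j+2 by omega]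
        ring
  calc ∑ k ∈ range (n+1), (av i k + av (i+1) k) * (av j k + av (j+1) k)
      = ∑ k ∈ range (n+1), (av i k * av j k + av i k * av (j+1) k
          + (av (i+1) k * av j k + av (i+1) k * av (j+1) k)) := by
        apply Finset.sum_congr rfl
        intro k _
        ring
    _ = _ := by
        simp only [Finset.sum_add_distrib]
        rw [S1, S2, S3, S4]
        ring

open Finset Matrix


private def Gm (d0 : ℤ) (m : ℕ) : Matrix (Fin m) (Fin m) ℤ := Matrix.of fun l k =>
  (if (l:ℕ) = (k:ℕ) then (if (l:ℕ) = 0 then d0 else 3) else 0)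
  + (if (l:ℕ) = (k:ℕ)+1 then 1 else 0) + (if (k:ℕ) = (l:ℕ)+1 then 1 else 0)

private lemma Gm_sub_succ (d0 : ℤ) (m : ℕ) :
    (Gm d0 (m+1)).submatrix Fin.succ Fin.succ = Gm 3 m := by
  ext i j
  simp only [Gm, Matrix.submatrix_apply, Matrix.of_apply, Fin.val_succ]
  split_ifs <;> first
    | exact ‹False›.elim
    | omega

private lemma Gm_det_step (d0 : ℤ) (m : ℕ) :
    (Gm d0 (m+2)).det = d0 * (Gm 3 (m+1)).det - (Gm 3 m).det := by
  rw [Matrix.det_succ_column_zero]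
  rw [Fin.sum_univ_succ, Fin.sum_univ_succ]
  have hzero : ∀ l : Fin m, Gm d0 (m+2) l.succ.succ 0 = 0 := by
    intro l
    simp only [Gm, Matrix.of_apply, Fin.val_succ, Fin.val_zero]
    split_ifs <;> first
      | exact ‹False›.elim
      | omega
  have hrest : (∑ l : Fin m, (-1 : ℤ) ^ (((l.succ.succ : Fin (m+2))) : ℕ)
      * Gm d0 (m+2) l.succ.succ 0
      * ((Gm d0 (m+2)).submatrix (l.succ.succ).succAbove Fin.succ).det) = 0 := by
    apply Finset.sum_eq_zero
    intro l _
    rw [hzero l]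
    ring
  rw [hrest]
  have h00 : Gm d0 (m+2) 0 0 = d0 := by simp [Gm]
  have h10 : Gm d0 (m+2) (Fin.succ 0) 0 = 1 := by
    simp only [Gm, Matrix.of_apply, Fin.val_succ, Fin.val_zero]
    norm_num
  rw [h00, h10]
  have hA : ((Gm d0 (m+2)).submatrix (Fin.succAbove 0) Fin.succ).det = (Gm 3 (m+1)).det := by
    rw [Fin.succAbove_zero, Gm_sub_succ]
  -- the (1,0) minor
  set B := (Gm d0 (m+2)).submatrix (Fin.succ (0 : Fin (m+1))).succAbove Fin.succ with hBdef
  have hB0 : ∀ j : Fin (m+1), B 0 j = if (j:ℕ) = 0 then 1 else 0 := by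
    intro j
    rw [hBdef]
    simp only [Matrix.submatrix_apply, Fin.succ_succAbove_zero, Gm, Matrix.of_apply,
      Fin.val_succ, Fin.val_zero]
    split_ifs <;> first
      | exact ‹False›.elim
      | omega
      | rfl
  have hBsub : B.submatrix Fin.succ Fin.succ = Gm 3 m := by
    ext i j
    rw [hBdef]
    simp only [Matrix.submatrix_apply, Fin.succ_succAbove_succ, Fin.succAbove_zero, Gm,
      Matrix.of_apply, Fin.val_succ]
    split_ifs <;> first
      | exact ‹False›.elim
      | omega
  have hdetB : B.det = (Gm 3 m).det := by
    rw [Matrix.det_succ_row_zero, Fin.sum_univ_succ]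
    have hzB : ∀ j : Fin m, B 0 j.succ = 0 := by
      intro j
      rw [hB0]
      simp
    have hr : (∑ j : Fin m, (-1:ℤ) ^ ((j.succ : Fin (m+1)) : ℕ) * B 0 j.succ
        * (B.submatrix Fin.succ (j.succ).succAbove).det) = 0 := by
      apply Finset.sum_eq_zero
      intro j _
      rw [hzB j]
      ring
    rw [hr, hB0, Fin.succAbove_zero, hBsub]
    norm_num
  rw [hdetB, hA]
  simp only [Fin.val_zero, Fin.val_succ, pow_zero, pow_succ, pow_zero]
  ring

private lemma fib_canon (c : ℕ) (h2 : 2 ≤ c) :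
    Nat.fib c = Nat.fib (c-2) + Nat.fib (c-1) := by
  obtain ⟨d, rfl⟩ : ∃ d, c = d + 2 := ⟨c - 2, by omega⟩
  rw [Nat.fib_add_two]
  congr 1 <;> congr 1 <;> omega

private lemma detGU : ∀ m : ℕ, (Gm 3 m).det = (Nat.fib (2*m+2) : ℤ) := by
  have key : ∀ m : ℕ, (Gm 3 m).det = (Nat.fib (2*m+2) : ℤ)
      ∧ (Gm 3 (m+1)).det = (Nat.fib (2*m+4) : ℤ) := by
    intro m
    induction m with
    | zero =>
      constructor
      · simp [Matrix.det_isEmpty]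
      · rw [show (Gm 3 1).det = Gm 3 1 0 0 from Matrix.det_fin_one _]
        simp [Gm, show Nat.fib 4 = 3 from rfl]
    | succ p ih =>
      obtain ⟨h1, h2⟩ := ih
      refine ⟨h2, ?_⟩
      rw [Gm_det_step, h1, h2, show 2*(p+1)+4 = 2*p+6 by ring]
      have a1 := fib_canon (2*p+6) (by omega)
      have a2 := fib_canon (2*p+5) (by omega)
      have a3 := fib_canon (2*p+4) (by omega)
      simp only [show 2*p+6-2 = 2*p+4 by omega, show 2*p+6-1 = 2*p+5 by omega,
        show 2*p+5-2 = 2*p+3 by omega, show 2*p+5-1 = 2*p+4 by omega,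
        show 2*p+4-2 = 2*p+2 by omega, show 2*p+4-1 = 2*p+3 by omega] at a1 a2 a3
      have big : Nat.fib (2*p+6) + Nat.fib (2*p+2) = 3 * Nat.fib (2*p+4) := by omega
      have h := congrArg (Nat.cast : ℕ → ℤ) big
      push_cast at h
      linarith [h]
  exact fun m => (key m).1

private lemma detGT (m : ℕ) : (Gm 2 m).det = (Nat.fib (2*m+1) : ℤ) := by
  match m with
  | 0 => simp [Matrix.det_isEmpty]
  | 1 =>
    rw [show (Gm 2 1).det = Gm 2 1 0 0 from Matrix.det_fin_one _]
    simp [Gm, show Nat.fib 3 = 2 from rfl]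
  | (p+2) =>
    rw [Gm_det_step, detGU, detGU, show 2*(p+2)+1 = 2*p+5 by ring,
      show 2*(p+1)+2 = 2*p+4 by ring]
    have a1 := fib_canon (2*p+5) (by omega)
    have a2 := fib_canon (2*p+4) (by omega)
    simp only [show 2*p+5-2 = 2*p+3 by omega, show 2*p+5-1 = 2*p+4 by omega,
      show 2*p+4-2 = 2*p+2 by omega, show 2*p+4-1 = 2*p+3 by omega] at a1 a2
    have big : Nat.fib (2*p+5) + Nat.fib (2*p+2) = 2 * Nat.fib (2*p+4) := by omega
    have h := congrArg (Nat.cast : ℕ → ℤ) big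
    push_cast at h
    linarith [h]

private lemma A_mul_P (n : ℕ) :
    (Matrix.of fun i k : Fin (n+1) => av i k) * Gm 2 (n+1)
      = Matrix.of (fun i k : Fin (n+1) => av i k + av ((i:ℕ)+1) k) := by
  ext i k
  rw [Matrix.mul_apply]
  simp only [Matrix.of_apply, Gm, mul_add]
  rw [Finset.sum_add_distrib, Finset.sum_add_distrib]
  have hS1 : (∑ l : Fin (n+1), av i l *
      (if (l:ℕ) = (k:ℕ) then (if (l:ℕ) = 0 then (2:ℤ) else 3) else 0))
      = (if (k:ℕ) = 0 then (2:ℤ) else 3) * av i k := by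
    rw [Finset.sum_eq_single k]
    · rw [if_pos rfl, mul_comm]
    · intro b _ hb
      rw [if_neg (fun h => hb (Fin.ext h)), mul_zero]
    · intro h
      exact absurd (Finset.mem_univ _) h
  have hS2 : (∑ l : Fin (n+1), av i l * (if (l:ℕ) = (k:ℕ)+1 then (1:ℤ) else 0))
      = av i ((k:ℕ)+1) := by
    by_cases hk : (k:ℕ) = n
    · rw [Finset.sum_eq_zero, hk, av_eq_zero (show (i:ℕ) < n+1 from i.isLt)]
      intro l _
      rw [if_neg (fun h => by have := l.isLt; omega), mul_zero]
    · have hk2 : (k:ℕ)+1 < n+1 := by have := k.isLt; omega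
      rw [Finset.sum_eq_single ⟨(k:ℕ)+1, hk2⟩]
      · rw [if_pos rfl, mul_one]
      · intro b _ hb
        rw [if_neg (fun h => hb (Fin.ext h)), mul_zero]
      · intro h
        exact absurd (Finset.mem_univ _) h
  have hS3 : (∑ l : Fin (n+1), av i l * (if (k:ℕ) = (l:ℕ)+1 then (1:ℤ) else 0))
      = (if (k:ℕ) = 0 then 0 else av i ((k:ℕ)-1)) := by
    by_cases hk : (k:ℕ) = 0
    · rw [if_pos hk, Finset.sum_eq_zero]
      intro l _
      rw [if_neg (fun h => by omega), mul_zero]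
    · rw [if_neg hk, Finset.sum_eq_single ⟨(k:ℕ)-1, by have := k.isLt; omega⟩]
      · show av ↑i ((k:ℕ)-1) * (if (k:ℕ) = ((k:ℕ)-1)+1 then 1 else 0) = av ↑i ((k:ℕ)-1)
        rw [if_pos (by omega), mul_one]
      · intro b _ hb
        rw [if_neg (fun h => hb (Fin.ext (show (b:ℕ) = (k:ℕ)-1 by omega))), mul_zero]
      · intro h
        exact absurd (Finset.mem_univ _) h
  rw [hS1, hS2, hS3]
  rcases hc : (k:ℕ) with _ | k'
  · rw [if_pos rfl, if_pos rfl, av_rec0]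
    ring
  · rw [if_neg (by omega), if_neg (by omega),
      show k'+1+1 = k'+2 from rfl, show k'+1-1 = k' from rfl, av_recS]
    ring

private lemma detA (n : ℕ) : (Matrix.of fun i k : Fin (n+1) => av i k).det = 1 := by
  rw [Matrix.det_of_lowerTriangular]
  · rw [Finset.prod_eq_one]
    intro i _
    exact av_diag i
  · intro i j hij
    exact av_eq_zero (show (i:ℕ) < (j:ℕ) from hij)

private lemma detQ (n : ℕ) :
    (Matrix.of fun i k : Fin (n+1) => av i k + av ((i:ℕ)+1) k).det
      = (Nat.fib (2*n+3) : ℤ) := by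
  rw [← A_mul_P, Matrix.det_mul, detA, one_mul, detGT, show 2*(n+1)+1 = 2*n+3 by ring]

private lemma main_aux : ∀ n : ℕ,
    Matrix.det (Matrix.of fun i j : Fin n =>
        (catalan ((i : ℕ) + (j : ℕ)) : ℤ)
          + 2 * (catalan ((i : ℕ) + (j : ℕ) + 1) : ℤ)
          + (catalan ((i : ℕ) + (j : ℕ) + 2) : ℤ))
      = ∑ j ∈ Finset.range (n + 1), (Nat.fib (2 * j + 1) : ℤ) ^ 2 := by
  intro n
  induction n with
  | zero =>
    rw [Matrix.det_isEmpty]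
    simp [Nat.fib_one]
  | succ n ih =>
    set Q : Matrix (Fin (n+1)) (Fin (n+1)) ℤ :=
      Matrix.of (fun i k : Fin (n+1) => av i k + av ((i:ℕ)+1) k) with hQdef
    have hentry : ∀ i j : Fin (n+1), (Q * Qᵀ) i j
        = (catalan ((i:ℕ)+(j:ℕ)) : ℤ) + 2 * (catalan ((i:ℕ)+(j:ℕ)+1) : ℤ)
          + (catalan ((i:ℕ)+(j:ℕ)+2) : ℤ)
          - (if (i:ℕ) = n ∧ (j:ℕ) = n then 1 else 0) := by
      intro i j
      rw [Matrix.mul_apply]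
      simp only [Matrix.transpose_apply, hQdef, Matrix.of_apply]
      rw [Fin.sum_univ_eq_sum_range
        (fun k => (av (i:ℕ) k + av ((i:ℕ)+1) k) * (av (j:ℕ) k + av ((j:ℕ)+1) k)) (n+1)]
      rw [sum_qq n (i:ℕ) (j:ℕ) (by omega) (by omega)]
    have hM : (Matrix.of fun i j : Fin (n+1) =>
        (catalan ((i : ℕ) + (j : ℕ)) : ℤ)
          + 2 * (catalan ((i : ℕ) + (j : ℕ) + 1) : ℤ)
          + (catalan ((i : ℕ) + (j : ℕ) + 2) : ℤ))
        = (Q * Qᵀ).updateRow (Fin.last n)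
            (((Q * Qᵀ) (Fin.last n) + Pi.single (Fin.last n) 1 : Fin (n+1) → ℤ)) := by
      ext i j
      by_cases hi : i = Fin.last n
      · subst hi
        rw [Matrix.updateRow_self]
        rw [Pi.add_apply, hentry, Pi.single_apply]
        by_cases hj : j = Fin.last n
        · subst hj
          rw [if_pos ⟨Fin.val_last n, Fin.val_last n⟩, if_pos rfl]
          simp [Fin.val_last]
        · rw [if_neg (fun h => hj (Fin.ext (h.2.trans (Fin.val_last n).symm))), if_neg hj]
          simp
      · rw [Matrix.updateRow_ne hi, hentry,
          if_neg (fun h => hi (Fin.ext (h.1.trans (Fin.val_last n).symm)))]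
        simp
    rw [hM, Matrix.det_updateRow_add, Matrix.updateRow_eq_self]
    have hfirst : (Q * Qᵀ).det = (Nat.fib (2*n+3) : ℤ) ^ 2 := by
      rw [Matrix.det_mul, Matrix.det_transpose, detQ]
      ring
    have hsecond : ((Q * Qᵀ).updateRow (Fin.last n) (Pi.single (Fin.last n) 1)).det
        = ∑ j ∈ Finset.range (n + 1), (Nat.fib (2 * j + 1) : ℤ) ^ 2 := by
      set D := (Q * Qᵀ).updateRow (Fin.last n) (Pi.single (Fin.last n) 1) with hDdef
      rw [Matrix.det_succ_row D (Fin.last n)]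
      rw [Finset.sum_eq_single (Fin.last n)]
      · have hD : D (Fin.last n) (Fin.last n) = 1 := by
          rw [hDdef, Matrix.updateRow_self, Pi.single_apply, if_pos rfl]
        rw [hD, Fin.succAbove_last]
        have hsub : D.submatrix Fin.castSucc Fin.castSucc
            = Matrix.of (fun i j : Fin n =>
              (catalan ((i : ℕ) + (j : ℕ)) : ℤ)
                + 2 * (catalan ((i : ℕ) + (j : ℕ) + 1) : ℤ)
                + (catalan ((i : ℕ) + (j : ℕ) + 2) : ℤ)) := by
          ext i j
          rw [Matrix.submatrix_apply, hDdef,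
            Matrix.updateRow_ne (Fin.castSucc_lt_last i).ne, hentry]
          have hne : ¬((Fin.castSucc i : ℕ) = n ∧ (Fin.castSucc j : ℕ) = n) := by
            intro h
            have := i.isLt
            simp [Fin.coe_castSucc] at h
            omega
          rw [if_neg hne]
          simp [Fin.coe_castSucc]
        rw [hsub, ih, Fin.val_last]
        have hsign : (-1 : ℤ) ^ (n + n) = 1 := by
          rw [show n + n = 2*n by ring, pow_mul]
          norm_num
        rw [hsign]
        ring
      · intro b _ hb
        have : D (Fin.last n) b = 0 := by
          rw [hDdef, Matrix.updateRow_self, Pi.single_apply, if_neg hb]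
        rw [this]
        ring
      · intro h
        exact absurd (Finset.mem_univ _) h
    rw [hfirst, hsecond, Finset.sum_range_succ (fun j => (Nat.fib (2*j+1) : ℤ)^2) (n+1),
      show 2*(n+1)+1 = 2*n+3 by ring]
    ring

/-- Eq. (1.3): `det(C_{i+j} + 2C_{i+j+1} + C_{i+j+2})_{i,j=0}^{n-1} = ∑_{j=0}^{n} F_{2j+1}²`
for `n ≥ 1`. -/
theorem hankel_catalan_three_term_eq_sum_fib_sq (n : ℕ) (hn : 0 < n) :
    Matrix.det (Matrix.of fun i j : Fin n =>
        (catalan ((i : ℕ) + (j : ℕ)) : ℤ)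
          + 2 * (catalan ((i : ℕ) + (j : ℕ) + 1) : ℤ)
          + (catalan ((i : ℕ) + (j : ℕ) + 2) : ℤ))
      = ∑ j ∈ Finset.range (n + 1), (Nat.fib (2 * j + 1) : ℤ) ^ 2 :=
  main_aux n
end
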